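/- arXiv:1708.02802 — 8 statements merged into one kernel-verified Lean document; each statement's English description precedes it below -/
import Mathlib

section
/- Let X be a topological manifold whose (holomorphic) automorphism group G is a σ-compact topological group acting continuously on X. Then X does not admit any tame infinite discrete subset: for every infinite discrete subset D = {p_n : n ∈ ℕ} and every exhaustion function ρ there is a map ζ: D → ℝ≥0 such that no automorphism φ ∈ G satisfies ρ(φ(p_n)) ≥ ζ(p_n) for all n. -/
/-!
Write `G = ⋃ Kₙ` with `Kₙ` compact. The continuous function `g ↦ ρ (g • pₙ)` is bounded on `Kₙ`,
so choosing `ζ n` above that bound, no `g ∈ Kₙ` can satisfy `ρ (g • pₙ) ≥ ζ n`; as every `g`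
lies in some `Kₙ`, no automorphism satisfies all the inequalities.
-/

theorem SigmaCompactSpace.exists_nonneg_forall_exists_lt {G : Type*} [TopologicalSpace G]
    [SigmaCompactSpace G] (f : ℕ → G → ℝ) (hf : ∀ n, Continuous (f n)) :
    ∃ ζ : ℕ → ℝ, (∀ n, 0 ≤ ζ n) ∧ ∀ g, ∃ n, f n g < ζ n := by
  have hbdd (n : ℕ) : BddAbove (f n '' compactCovering G n) :=
    (isCompact_compactCovering G n).bddAbove_image (hf n).continuousOn
  choose b hb using hbdd
  refine ⟨fun n => max 0 (b n) + 1, fun n => by positivity, fun g => ?_⟩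
  obtain ⟨n, hn⟩ := exists_mem_compactCovering g
  exact ⟨n, (hb n ⟨g, hn, rfl⟩).trans_lt ((le_max_right _ _).trans_lt (lt_add_one _))⟩

theorem stmt1_general {X : Type*} [TopologicalSpace X]
    {G : Type*} [Group G] [TopologicalSpace G]
    [SigmaCompactSpace G] [MulAction G X]
    (hcont : Continuous fun p : G × X => p.1 • p.2)
    (p : ℕ → X)
    (ρ : X → ℝ)
    (hρ : Continuous ρ ∧ (∀ x, 0 ≤ ρ x) ∧ ∀ c : ℝ, IsCompact {x | ρ x ≤ c}) :
    ∃ ζ : ℕ → ℝ, (∀ n, 0 ≤ ζ n) ∧ ∀ g : G, ∃ n, ρ (g • p n) < ζ n :=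
  SigmaCompactSpace.exists_nonneg_forall_exists_lt (fun n g => ρ (g • p n)) fun _ =>
    hρ.1.comp (hcont.comp (continuous_id.prodMk continuous_const))

/-- A topological manifold whose automorphism group is a σ-compact
topological group acting continuously admits no tame infinite discrete subset. -/
theorem stmt1 {d : ℕ} {X : Type*} [TopologicalSpace X]
    [ChartedSpace (EuclideanSpace ℝ (Fin d)) X]
    {G : Type*} [Group G] [TopologicalSpace G] [IsTopologicalGroup G]
    [SigmaCompactSpace G] [MulAction G X]
    (hcont : Continuous fun p : G × X => p.1 • p.2)
    (p : ℕ → X) (hpinj : Function.Injective p)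
    (hpclosed : IsClosed (Set.range p)) (hpdisc : DiscreteTopology (Set.range p))
    (ρ : X → ℝ)
    (hρ : Continuous ρ ∧ (∀ x, 0 ≤ ρ x) ∧ ∀ c : ℝ, IsCompact {x | ρ x ≤ c}) :
    ∃ ζ : ℕ → ℝ, (∀ n, 0 ≤ ζ n) ∧ ∀ g : G, ∃ n, ρ (g • p n) < ζ n :=
  stmt1_general hcont p ρ hρ
end

section
/- Let D ⊂ ℂⁿ be a discrete subset such that for every ζ: D → ℝ≥0 there is a holomorphic automorphism φ of ℂⁿ with ‖φ(x)‖ ≥ ζ(x) for all x ∈ D. Then there is an enumeration D = {a_k : k ∈ ℕ} and a holomorphic automorphism φ of ℂⁿ such that ∑_k ‖φ(a_k)‖^{-(2n-1)} < ∞. -/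
/-- A holomorphic automorphism of ℂⁿ. -/
def IsAutCn (n : ℕ) (φ : EuclideanSpace ℂ (Fin n) → EuclideanSpace ℂ (Fin n)) : Prop :=
  Function.Bijective φ ∧ Differentiable ℂ φ ∧
    ∃ ψ : EuclideanSpace ℂ (Fin n) → EuclideanSpace ℂ (Fin n),
      Function.LeftInverse ψ φ ∧ Function.RightInverse ψ φ ∧ Differentiable ℂ ψ

/-- if a discrete set D ⊂ ℂⁿ can be pushed above any prescribed function
by automorphisms, then there is an enumeration (a_k) of D and an automorphism φ with
∑ 1/‖φ(a_k)‖^(2n-1) < ∞. -/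
theorem stmt2 {n : ℕ} (hn : 0 < n) (D : Set (EuclideanSpace ℂ (Fin n)))
    (hDinf : D.Infinite) (hDclosed : IsClosed D) (hDdisc : DiscreteTopology D)
    (H : ∀ ζ : D → ℝ, (∀ x, 0 ≤ ζ x) →
      ∃ φ, IsAutCn n φ ∧ ∀ x : D, ζ x ≤ ‖φ (x : EuclideanSpace ℂ (Fin n))‖) :
    ∃ a : ℕ → EuclideanSpace ℂ (Fin n), Function.Injective a ∧ Set.range a = D ∧
      ∃ φ, IsAutCn n φ ∧ Summable fun k : ℕ => 1 / ‖φ (a k)‖ ^ (2 * n - 1) := by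
  haveI : Countable D := TopologicalSpace.separableSpace_iff_countable.mp inferInstance
  haveI : Infinite D := hDinf.to_subtype
  obtain ⟨d⟩ := nonempty_denumerable ↥D
  let e : ℕ ≃ D := (Denumerable.eqv ↥D).symm
  refine ⟨fun k => (e k : EuclideanSpace ℂ (Fin n)), ?_, ?_, ?_⟩
  · exact Subtype.val_injective.comp e.injective
  · ext x
    simp only [Set.mem_range]
    constructor
    · rintro ⟨k, rfl⟩; exact (e k).2
    · intro hx; exact ⟨e.symm ⟨x, hx⟩, by simp⟩
  · obtain ⟨φ, hφ, hge⟩ := H (fun x => (2 : ℝ) ^ (e.symm x)) (fun x => by positivity)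
    refine ⟨φ, hφ, ?_⟩
    have hs : Summable (fun k : ℕ => (1 / 2 : ℝ) ^ k) :=
      summable_geometric_of_lt_one (by norm_num) (by norm_num)
    refine hs.of_nonneg_of_le (fun k => by positivity) ?_
    intro k
    have h1 : (2 : ℝ) ^ k ≤ ‖φ (e k : EuclideanSpace ℂ (Fin n))‖ := by
      simpa using hge (e k)
    have h2 : (2 : ℝ) ^ k ≤ ((2 : ℝ) ^ k) ^ (2 * n - 1) :=
      le_self_pow₀ (one_le_pow₀ (by norm_num)) (by omega)
    have h3 : ((2 : ℝ) ^ k) ^ (2 * n - 1) ≤ ‖φ (e k : EuclideanSpace ℂ (Fin n))‖ ^ (2 * n - 1) :=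
      pow_le_pow_left₀ (by positivity) h1 _
    calc 1 / ‖φ (e k : EuclideanSpace ℂ (Fin n))‖ ^ (2 * n - 1) ≤ 1 / 2 ^ k :=
          one_div_le_one_div_of_le (by positivity) (h2.trans h3)
      _ = (1 / 2 : ℝ) ^ k := by rw [div_pow, one_pow]
end

section
/- Let V and W be finite-dimensional real inner product spaces with V ≠ {0}, π: V → W a linear map, and K a connected compact Lie group acting linearly and orthogonally on V such that ker π contains no non-trivial K-invariant linear subspace. Let μ be the normalized Haar measure on K. Then for every r, δ > 0 there exists R > 0 such that μ{k ∈ K : ‖π(k·v)‖ < r} < δ for all v ∈ V with ‖v‖ > R. -/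
/-!
Fix a nonzero `u`. If `{k | π (k • u) = 0}` had positive Haar measure, take a submodule `M ∋ u`
maximal among those for which `Z M = {k | M ≤ k • ker π}` has positive measure. Since
`g • Z M ∩ Z M = Z (g • M ⊔ M)` and `μ (g • Z M \ Z M) → 0` as `g → 1`, maximality forces
`g • M ≤ M` near `1`. The stabilizer of `M` is then an open subgroup, hence all of the connected
group `K`, so `M` is a nonzero invariant submodule of `ker π`. (`Z (ℝ ∙ u)` is the inverse of
`{k | π (k • u) = 0}`, and Haar measure on a compact group is inversion invariant.)

So `μ {k | ‖π (k • u)‖ < ε} → 0` as `ε → 0`; compactness of `K` and of the unit sphere makes this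
uniform in `u` on the sphere, and homogeneity transfers it to all `v` with `‖v‖` large.
-/
open MeasureTheory Measure Filter Topology Pointwise

section CompactGroup

variable {G : Type*} [Group G] [TopologicalSpace G] [IsTopologicalGroup G] [CompactSpace G]
  [MeasurableSpace G] [BorelSpace G] (μ : Measure G) [μ.IsHaarMeasure] [IsProbabilityMeasure μ]

theorem isMulRightInvariant_of_compactSpace : μ.IsMulRightInvariant where
  map_mul_right_eq_self g :=
    have := isProbabilityMeasure_map (μ := μ) (measurable_mul_const g).aemeasurable
    isHaarMeasure_eq_of_isProbabilityMeasure _ _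

theorem isInvInvariant_of_compactSpace : μ.IsInvInvariant := by
  have := isMulRightInvariant_of_compactSpace μ
  have : IsProbabilityMeasure μ.inv := isProbabilityMeasure_map measurable_inv.aemeasurable
  have : μ.inv.IsHaarMeasure := {}
  exact ⟨isHaarMeasure_eq_of_isProbabilityMeasure _ _⟩

end CompactGroup

theorem eventually_nhds_one_measure_smul_inter_ne_zero {G : Type*} [Group G] [TopologicalSpace G]
    [IsTopologicalGroup G] [LocallyCompactSpace G] [MeasurableSpace G] [BorelSpace G]
    (μ : Measure G) [μ.IsMulLeftInvariant] [IsFiniteMeasureOnCompacts μ]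
    [μ.InnerRegularCompactLTTop] {Z : Set G} (hZ : IsCompact Z) (hZc : IsClosed Z)
    (h : μ Z ≠ 0) :
    ∀ᶠ g in 𝓝 (1 : G), μ (g • Z ∩ Z) ≠ 0 := by
  filter_upwards [eventually_nhds_one_measure_smul_sdiff_lt hZ hZc h (μ := μ)] with g hg hzero
  have := measure_inter_add_sdiff (μ := μ) (g • Z) hZc.measurableSet
  rw [hzero, zero_add, measure_smul] at this
  exact hg.ne this

theorem Subgroup.eq_top_of_mem_nhds_one {G : Type*} [Group G] [TopologicalSpace G]
    [IsTopologicalGroup G] [ConnectedSpace G] (H : Subgroup G) (h : (H : Set G) ∈ 𝓝 1) :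
    H = ⊤ := by
  have hopen := H.isOpen_of_mem_nhds h
  exact SetLike.coe_injective <|
    IsClopen.eq_univ ⟨H.isClosed_of_isOpen hopen, hopen⟩ ⟨1, H.one_mem⟩

namespace Submodule

variable {K R V : Type*} [Group K] [Ring R] [AddCommGroup V] [Module R V]
  [DistribMulAction K V] [SMulCommClass K R V]

theorem mem_pointwise_smul_iff_inv_smul_mem {g : K} {w : V} {L : Submodule R V} :
    w ∈ g • L ↔ g⁻¹ • w ∈ L := by
  rw [← SetLike.mem_coe, coe_pointwise_smul, Set.mem_smul_set_iff_inv_smul_mem, SetLike.mem_coe]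

theorem le_pointwise_smul_iff {g : K} {U L : Submodule R V} :
    U ≤ g • L ↔ ∀ w ∈ U, g⁻¹ • w ∈ L := by
  simp only [SetLike.le_def, mem_pointwise_smul_iff_inv_smul_mem]

theorem smul_setOf_le_pointwise_smul (g : K) (U L : Submodule R V) :
    g • {k : K | U ≤ k • L} = {k | g • U ≤ k • L} := by
  ext k
  simp [Set.mem_smul_set_iff_inv_smul_mem, le_pointwise_smul_iff, mem_smul_pointwise_iff_exists,
    mul_smul]

end Submodule

section Representation

open Submodule

variable {K R V : Type*} [Group K] [Ring R] [AddCommGroup V] [Module R V]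
  [DistribMulAction K V] [SMulCommClass K R V] [TopologicalSpace K] [IsTopologicalGroup K]

theorem smul_eq_self_of_eventually_smul_le [ConnectedSpace K] {M : Submodule R V}
    (h : ∀ᶠ g in 𝓝 (1 : K), g • M ≤ M) (g : K) : g • M = M := by
  have hstab : (MulAction.stabilizer K M : Set K) ∈ 𝓝 1 := by
    filter_upwards [h, inv_mem_nhds_one K h] with g hg hg'
    exact le_antisymm hg <| le_pointwise_smul_iff.2 fun w hw =>
      hg' (smul_mem_pointwise_smul w _ M hw)
  have : g ∈ MulAction.stabilizer K M :=
    (MulAction.stabilizer K M).eq_top_of_mem_nhds_one hstab ▸ Subgroup.mem_top g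
  exact this

variable [TopologicalSpace V] [ContinuousSMul K V]

theorem isClosed_setOf_le_pointwise_smul {L : Submodule R V} (hL : IsClosed (L : Set V))
    (U : Submodule R V) : IsClosed {k : K | U ≤ k • L} := by
  simp only [le_pointwise_smul_iff, Set.ofPred_forall]
  exact isClosed_biInter fun w _ =>
    hL.preimage (continuous_inv.smul continuous_const : Continuous fun k : K => k⁻¹ • w)

variable [CompactSpace K] [MeasurableSpace K] [BorelSpace K] (μ : Measure K) [μ.IsHaarMeasure]

theorem eventually_smul_le_of_maximal {L : Submodule R V} (hL : IsClosed (L : Set V))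
    {M : Submodule R V} (hM : Maximal (fun U => μ {k : K | U ≤ k • L} ≠ 0) M) :
    ∀ᶠ g in 𝓝 (1 : K), g • M ≤ M := by
  have hclosed := isClosed_setOf_le_pointwise_smul (K := K) hL M
  filter_upwards [eventually_nhds_one_measure_smul_inter_ne_zero μ hclosed.isCompact hclosed
    hM.prop] with g hg
  simp only [smul_setOf_le_pointwise_smul, ← Set.ofPred_and, ← sup_le_iff] at hg
  exact le_sup_left.trans (hM.eq_of_ge hg le_sup_right).le

theorem measure_setOf_le_pointwise_smul_eq_zero [ConnectedSpace K] [IsNoetherian R V]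
    {L : Submodule R V} (hL : IsClosed (L : Set V))
    (hinv : ∀ U : Submodule R V, (∀ k : K, k • U = U) → U ≤ L → U = ⊥)
    {U : Submodule R V} (hU : U ≠ ⊥) : μ {k : K | U ≤ k • L} = 0 := by
  by_contra hpos
  obtain ⟨M, hUM, hM⟩ :=
    exists_maximal_ge_of_wellFoundedGT (fun U => μ {k : K | U ≤ k • L} ≠ 0) U hpos
  have hMinv := smul_eq_self_of_eventually_smul_le (eventually_smul_le_of_maximal μ hL hM)
  obtain ⟨k, hk⟩ := nonempty_of_measure_ne_zero hM.prop
  have hML : M ≤ L := fun w hw => by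
    simpa using le_pointwise_smul_iff.1 hk (k • w) (hMinv k ▸ smul_mem_pointwise_smul w k M hw)
  exact hU (le_bot_iff.1 (hinv M hMinv hML ▸ hUM))

end Representation

theorem Continuous.eventually_forall_dist_lt {X K E : Type*} [TopologicalSpace X]
    [TopologicalSpace K] [CompactSpace K] [PseudoMetricSpace E] {f : X → K → E}
    (hf : Continuous ↿f) (x : X) {η : ℝ} (hη : 0 < η) :
    ∀ᶠ y in 𝓝 x, ∀ k, dist (f x k) (f y k) < η := by
  have hcont : Continuous fun p : X × K => dist (f x p.2) (f p.1 p.2) :=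
    (hf.comp (continuous_const.prodMk continuous_snd)).dist hf
  exact (isCompact_univ.eventually_forall_of_forall_eventually fun k _ =>
    (hcont.tendsto (x, k)).eventually_lt_const (by simpa using hη)).mono fun _ hy k => hy k trivial

section SmallValues

variable {X K E : Type*} [TopologicalSpace K] [MeasurableSpace K] [OpensMeasurableSpace K]
  [NormedAddCommGroup E] {μ : Measure K} [IsFiniteMeasure μ]

theorem tendsto_measure_setOf_norm_lt {g : K → E} (hg : Continuous g) :
    Tendsto (fun ε : ℝ => μ {k | ‖g k‖ < ε}) (𝓝[>] 0) (𝓝 (μ {k | g k = 0})) := by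
  have hzero : ⋂ ε > (0 : ℝ), {k | ‖g k‖ < ε} = {k | g k = 0} := by
    ext k
    simp only [Set.mem_iInter, Set.mem_ofPred_eq, ← norm_le_zero_iff, forall_gt_iff_le]
  rw [← hzero]
  exact tendsto_measure_biInter_gt (ι := ℝ)
    (fun ε _ => (isOpen_lt (continuous_norm.comp hg) continuous_const).nullMeasurableSet)
    (fun _ _ _ hεε' _ hk => lt_of_lt_of_le hk hεε') ⟨1, one_pos, measure_ne_top μ _⟩

variable [TopologicalSpace X] [CompactSpace K]

theorem eventually_measure_setOf_norm_lt_lt {f : X → K → E} (hf : Continuous ↿f) {x : X}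
    (hx : μ {k | f x k = 0} = 0) {δ : ENNReal} (hδ : 0 < δ) :
    ∀ᶠ p : ℝ × X in 𝓝 (0, x), μ {k | ‖f p.2 k‖ < p.1} < δ := by
  have hlim := tendsto_measure_setOf_norm_lt (μ := μ) (hf.uncurry_left x)
  rw [hx] at hlim
  obtain ⟨ε, hεδ, hε⟩ := ((hlim.eventually (gt_mem_nhds hδ)).and self_mem_nhdsWithin).exists
  filter_upwards [(eventually_lt_nhds (half_pos hε)).prodMk_nhds
    (hf.eventually_forall_dist_lt x (half_pos hε))] with p ⟨hp, hpx⟩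
  refine lt_of_le_of_lt (measure_mono fun k (hk : ‖f p.2 k‖ < p.1) => ?_) hεδ
  show ‖f x k‖ < ε
  have := norm_sub_norm_le (f x k) (f p.2 k)
  rw [← dist_eq_norm] at this
  linarith [hpx k]

theorem IsCompact.exists_pos_forall_measure_setOf_norm_lt {f : X → K → E} (hf : Continuous ↿f)
    {S : Set X} (hS : IsCompact S) (h0 : ∀ x ∈ S, μ {k | f x k = 0} = 0) {δ : ENNReal}
    (hδ : 0 < δ) : ∃ ε > 0, ∀ x ∈ S, μ {k | ‖f x k‖ < ε} < δ := by
  have := hS.eventually_forall_of_forall_eventually (x₀ := (0 : ℝ))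
    (P := fun ε x => μ {k | ‖f x k‖ < ε} < δ) fun x hx =>
    eventually_measure_setOf_norm_lt_lt (μ := μ) hf (h0 x hx) hδ
  obtain ⟨ε, hε, hεpos⟩ :=
    ((this.filter_mono (nhdsWithin_le_nhds (s := Set.Ioi 0))).and self_mem_nhdsWithin).exists
  exact ⟨ε, hεpos, hε⟩

end SmallValues

theorem measure_setOf_apply_smul_eq_zero {K R V W : Type*} [Group K] [TopologicalSpace K]
    [IsTopologicalGroup K] [CompactSpace K] [ConnectedSpace K] [MeasurableSpace K] [BorelSpace K]
    (μ : Measure K) [μ.IsHaarMeasure] [IsProbabilityMeasure μ]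
    [Ring R] [AddCommGroup V] [Module R V] [IsNoetherian R V] [DistribMulAction K V]
    [SMulCommClass K R V] [TopologicalSpace V] [ContinuousSMul K V] [AddCommGroup W] [Module R W]
    (π : V →ₗ[R] W) (hπ : IsClosed (π.ker : Set V))
    (hker : ∀ U : Submodule R V, (∀ (k : K), ∀ v ∈ U, k • v ∈ U) → (∀ v ∈ U, π v = 0) → U = ⊥)
    {u : V} (hu : u ≠ 0) : μ {k : K | π (k • u) = 0} = 0 := by
  have := isInvInvariant_of_compactSpace μ
  have hset : {k : K | π (k • u) = 0} = {k | R ∙ u ≤ k • π.ker}⁻¹ := by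
    ext k
    simp [Submodule.span_singleton_le_iff_mem, Submodule.mem_pointwise_smul_iff_inv_smul_mem]
  rw [hset, measure_inv]
  refine measure_setOf_le_pointwise_smul_eq_zero μ hπ (fun U hU hUπ => hker U
    (fun k v hv => hU k ▸ Submodule.smul_mem_pointwise_smul v k U hv) fun v hv => hUπ hv) ?_
  simpa using hu

theorem stmt6_general {V W : Type*}
    [NormedAddCommGroup V] [InnerProductSpace ℝ V] [FiniteDimensional ℝ V]
    [NormedAddCommGroup W] [InnerProductSpace ℝ W]
    (π : V →ₗ[ℝ] W)
    {K : Type*} [Group K] [TopologicalSpace K] [IsTopologicalGroup K]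
    [CompactSpace K] [ConnectedSpace K]
    [MeasurableSpace K] [BorelSpace K]
    [MulAction K V]
    (hlin : ∀ k : K, IsLinearMap ℝ fun v : V => k • v)
    (hcont : Continuous fun p : K × V => p.1 • p.2)
    (hker : ∀ U : Submodule ℝ V, (∀ (k : K), ∀ v ∈ U, k • v ∈ U) →
      (∀ v ∈ U, π v = 0) → U = ⊥)
    (μ : Measure K) [μ.IsHaarMeasure] [IsProbabilityMeasure μ] :
    ∀ r δ : ℝ, 0 < r → 0 < δ → ∃ R : ℝ, 0 < R ∧
      ∀ v : V, R < ‖v‖ → μ {k : K | ‖π (k • v)‖ < r} < ENNReal.ofReal δ := by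
  intro r δ hr hδ
  let : DistribMulAction K V :=
    { ‹MulAction K V› with
      smul_zero := fun k => (hlin k).map_zero
      smul_add := fun k => (hlin k).map_add }
  have : SMulCommClass K ℝ V := ⟨fun k c v => (hlin k).map_smul c v⟩
  have : ContinuousSMul K V := ⟨hcont⟩
  have hf : Continuous ↿(fun (v : V) (k : K) => π (k • v)) :=
    π.continuous_of_finiteDimensional.comp (hcont.comp continuous_swap)
  obtain ⟨ε, hε, hsmall⟩ := (isCompact_sphere (0 : V) 1).exists_pos_forall_measure_setOf_norm_lt
    (μ := μ) hf (fun u hu => measure_setOf_apply_smul_eq_zero μ π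
      π.ker.closed_of_finiteDimensional hker (ne_zero_of_mem_unit_sphere ⟨u, hu⟩))
    (ENNReal.ofReal_pos.2 hδ)
  refine ⟨r / ε, by positivity, fun v hv => ?_⟩
  have hv0 : 0 < ‖v‖ := (div_pos hr hε).trans hv
  refine (measure_mono fun k (hk : ‖π (k • v)‖ < r) => ?_).trans_lt
    (hsmall (‖v‖⁻¹ • v) (by simp [norm_smul, hv0.ne']))
  show ‖π (k • ‖v‖⁻¹ • v)‖ < ε
  rw [smul_comm, π.map_smul, norm_smul, norm_inv, norm_norm, inv_mul_lt_iff₀ hv0]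
  exact hk.trans ((div_lt_iff₀ hε).1 hv)

/-- for a compact connected group acting orthogonally on V with no
nontrivial invariant subspace inside ker π, vectors of large norm are pushed to
large ‖π(k·v)‖ for most k (w.r.t. Haar probability measure). -/
theorem stmt6 {V W : Type*}
    [NormedAddCommGroup V] [InnerProductSpace ℝ V] [FiniteDimensional ℝ V] [Nontrivial V]
    [NormedAddCommGroup W] [InnerProductSpace ℝ W] [FiniteDimensional ℝ W]
    (π : V →ₗ[ℝ] W)
    {K : Type*} [Group K] [TopologicalSpace K] [IsTopologicalGroup K]
    [CompactSpace K] [ConnectedSpace K]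
    [MeasurableSpace K] [BorelSpace K]
    [MulAction K V]
    (hlin : ∀ k : K, IsLinearMap ℝ fun v : V => k • v)
    (horth : ∀ (k : K) (v : V), ‖k • v‖ = ‖v‖)
    (hcont : Continuous fun p : K × V => p.1 • p.2)
    (hker : ∀ U : Submodule ℝ V, (∀ (k : K), ∀ v ∈ U, k • v ∈ U) →
      (∀ v ∈ U, π v = 0) → U = ⊥)
    (μ : Measure K) [μ.IsHaarMeasure] [IsProbabilityMeasure μ] :
    ∀ r δ : ℝ, 0 < r → 0 < δ → ∃ R : ℝ, 0 < R ∧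
      ∀ v : V, R < ‖v‖ → μ {k : K | ‖π (k • v)‖ < r} < ENNReal.ofReal δ :=
  stmt6_general π hlin hcont hker μ
end

section
/- Every holomorphic automorphism of X = Δ × ℂ (Δ the open unit disc) has the form (z, w) ↦ (φ(z), f(z)·w + g(z)) where φ is a holomorphic automorphism of Δ, f: Δ → ℂ* is holomorphic and nowhere zero, and g: Δ → ℂ is holomorphic. -/
/-!
For fixed `z`, `w ↦ (Φ (z, w)).1` is a bounded entire function, hence constant by Liouville. So an
automorphism `Φ` of `Δ × ℂ` and its inverse permute the fibres `{z} × ℂ`: they induce mutually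
inverse holomorphic maps of `Δ`, and on each fibre mutually inverse entire functions `h`, `k`.
As `k ∘ h = id`, `h` is proper, so `1 / h (1 / z)` has a removable singularity with a zero of
finite order `n` at `0`; hence `h = O(wⁿ)` and `h` is a polynomial by Cauchy's estimates. So is `k`,
and `h ∘ k = id` forces `deg h = 1`: `h w = (h 1 - h 0) * w + h 0`, which exhibits `f` and `g` as
holomorphic functions of `z`.
-/

open Set Metric Filter Topology Bornology Polynomial Asymptotics Function

theorem tendsto_cobounded_of_leftInverse {α β : Type*} [PseudoMetricSpace α] [PseudoMetricSpace β]
    [ProperSpace β] {h : α → β} {k : β → α} (hk : Continuous k) (hkh : LeftInverse k h) :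
    Tendsto h (cobounded α) (cobounded β) := by
  have hk_bdd : comap k (cobounded α) ≤ cobounded β := comap_cobounded_le_iff.2 fun s hs =>
    ((hs.isCompact_closure.image hk).isBounded).subset (image_mono subset_closure)
  calc map h (cobounded α) = map h (comap h (comap k (cobounded α))) := by
        rw [comap_comap, hkh.comp_eq_id, comap_id]
    _ ≤ comap k (cobounded α) := map_comap_le
    _ ≤ cobounded β := hk_bdd

namespace Differentiable

open scoped Nat

variable {h k : ℂ → ℂ}

theorem exists_isBigO_pow_of_tendsto_cobounded (hh : Differentiable ℂ h)
    (hproper : Tendsto h (cobounded ℂ) (cobounded ℂ)) : ∃ n : ℕ, h =O[cobounded ℂ] (· ^ n) := by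
  have hlim : Tendsto (fun z => h z⁻¹) (𝓝[≠] 0) (cobounded ℂ) :=
    hproper.comp tendsto_inv₀_nhdsNE_zero
  set H : ℂ → ℂ := update (fun z => (h z⁻¹)⁻¹) 0 0
  have hH_ne : ∀ᶠ z in 𝓝[≠] (0 : ℂ), H z ≠ 0 := by
    filter_upwards [self_mem_nhdsWithin, hlim.eventually_ne_cobounded 0] with z hz hhz
    simpa [H, update_of_ne hz] using hhz
  have hH_diff : ∀ᶠ z in 𝓝[≠] (0 : ℂ), DifferentiableAt ℂ H z := by
    filter_upwards [self_mem_nhdsWithin, hlim.eventually_ne_cobounded 0] with z hz hhz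
    have hz' : z ≠ 0 := hz
    refine (((hh _).comp z (differentiableAt_inv hz')).inv hhz).congr_of_eventuallyEq ?_
    filter_upwards [isOpen_compl_singleton.mem_nhds hz'] with x hx
    exact update_of_ne hx _ _
  have hH_an : AnalyticAt ℂ H 0 :=
    Complex.analyticAt_of_differentiable_on_punctured_nhds_of_continuousAt hH_diff
      (continuousAt_update_same.2 (tendsto_inv₀_cobounded.comp hlim))
  obtain ⟨n, g, hg_an, hg0, hHg⟩ := hH_an.exists_eventuallyEq_pow_smul_nonzero_iff.2 fun hzero =>
    ((hzero.filter_mono nhdsWithin_le_nhds).and hH_ne).exists.elim fun _ hz => hz.2 hz.1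
  refine ⟨n, ?_⟩
  have hg_inv : (fun w => (g w⁻¹)⁻¹) =O[cobounded ℂ] (fun _ => (1 : ℂ)) :=
    ((hg_an.continuousAt.tendsto.comp tendsto_inv₀_cobounded).inv₀
      (by simpa using hg0)).isBigO_one ℂ
  refine ((isBigO_refl (· ^ n) _).mul hg_inv).congr' ?_ (by simp)
  filter_upwards [tendsto_inv₀_cobounded.eventually hHg, eventually_ne_cobounded 0] with w hw hw0
  have hHw : H w⁻¹ = (h w)⁻¹ := by simp [H, update_of_ne (inv_ne_zero hw0)]
  rw [← inv_inv (h w), ← hHw, hw]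
  simp only [sub_zero, smul_eq_mul, mul_inv, inv_pow, inv_inv]

theorem iteratedDeriv_eq_zero_of_isBigO_pow (hh : Differentiable ℂ h) {n k : ℕ}
    (hO : h =O[cobounded ℂ] (· ^ n)) (hnk : n < k) : iteratedDeriv k h 0 = 0 := by
  obtain ⟨C, hC, hCO⟩ := hO.exists_pos
  obtain ⟨r, hr⟩ := (hasBasis_cobounded_compl_closedBall (0 : ℂ)).eventually_iff.1 hCO.bound
  have hcauchy : ∀ R, max r 1 < R → ‖iteratedDeriv k h 0‖ ≤ k ! * C / R := by
    intro R hR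
    have hR1 : 1 ≤ R := (le_max_right _ _).trans hR.le
    have hR0 : 0 < R := zero_lt_one.trans_le hR1
    calc ‖iteratedDeriv k h 0‖ ≤ k ! * (C * R ^ n) / R ^ k := by
          refine Complex.norm_iteratedDeriv_le_of_forall_mem_sphere_norm_le k hR0 hh.diffContOnCl
            fun w hw => ?_
          have hw' : ‖w‖ = R := by simpa using hw
          simpa [hw'] using hr.2 (show w ∉ closedBall 0 r by
            simp [hw', (le_max_left _ _).trans_lt hR])
      _ = k ! * C / R ^ (k - n) := by
          rw [pow_sub₀ R hR0.ne' hnk.le]; field_simp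
      _ ≤ k ! * C / R := by
          gcongr
          exact le_self_pow₀ hR1 (Nat.sub_ne_zero_of_lt hnk)
  have hlim : Tendsto (fun R : ℝ => k ! * C / R) atTop (𝓝 0) :=
    tendsto_const_nhds.div_atTop tendsto_id
  exact norm_le_zero_iff.1 <| ge_of_tendsto hlim <|
    (eventually_gt_atTop (max r 1)).mono hcauchy

theorem exists_polynomial_of_isBigO_pow (hh : Differentiable ℂ h) {n : ℕ}
    (hO : h =O[cobounded ℂ] (· ^ n)) : ∃ p : ℂ[X], ∀ w, h w = p.eval w := by
  refine ⟨∑ k ∈ Finset.range (n + 1), C ((k ! : ℂ)⁻¹ * iteratedDeriv k h 0) * X ^ k, fun w => ?_⟩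
  rw [← Complex.taylorSeries_eq_of_entire' hh (c := 0) (z := w),
    tsum_eq_sum (s := Finset.range (n + 1))]
  · simp [eval_finsetSum]
  · intro k hk
    simp [hh.iteratedDeriv_eq_zero_of_isBigO_pow hO (by simpa using hk)]

theorem exists_polynomial_of_leftInverse (hh : Differentiable ℂ h) (hk : Continuous k)
    (hkh : LeftInverse k h) : ∃ p : ℂ[X], ∀ w, h w = p.eval w :=
  let ⟨_, hO⟩ :=
    hh.exists_isBigO_pow_of_tendsto_cobounded (tendsto_cobounded_of_leftInverse hk hkh)
  hh.exists_polynomial_of_isBigO_pow hO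

theorem eq_affine_of_leftInverse_of_rightInverse (hh : Differentiable ℂ h)
    (hk : Differentiable ℂ k) (hkh : LeftInverse k h) (hhk : RightInverse k h) (w : ℂ) :
    h w = (h 1 - h 0) * w + h 0 := by
  obtain ⟨p, hp⟩ := hh.exists_polynomial_of_leftInverse hk.continuous hkh
  obtain ⟨q, hq⟩ := hk.exists_polynomial_of_leftInverse hh.continuous hhk
  have hpq : p.comp q = X := Polynomial.funext fun w => by simp [← hp, ← hq, hhk w]
  have hdeg : p.natDegree = 1 :=
    Nat.eq_one_of_mul_eq_one_right (by rw [← natDegree_comp, hpq, natDegree_X])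
  have hlin : ∀ w, h w = p.coeff 1 * w + p.coeff 0 := fun w => by
    rw [hp, eq_X_add_C_of_natDegree_le_one hdeg.le]; simp
  simp only [hlin]; ring

end Differentiable

namespace DifferentiableOn

variable {E G : Type*} [NormedAddCommGroup E] [NormedSpace ℂ E] [NormedAddCommGroup G]
  [NormedSpace ℂ G] {U : Set E} {F : E × ℂ → G} {z : E}

theorem differentiable_apply_mk (hU : IsOpen U) (hF : DifferentiableOn ℂ F (U ×ˢ univ))
    (hz : z ∈ U) : Differentiable ℂ fun w => F (z, w) := fun w =>
  (hF.differentiableAt ((hU.prod isOpen_univ).mem_nhds ⟨hz, trivial⟩)).comp w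
    ((differentiableAt_const z).prodMk differentiableAt_id)

theorem differentiableOn_apply_mk_const (hF : DifferentiableOn ℂ F (U ×ˢ univ)) (w : ℂ) :
    DifferentiableOn ℂ (fun z => F (z, w)) U :=
  hF.comp (differentiableOn_id.prodMk (differentiableOn_const w)) fun _ hz => ⟨hz, trivial⟩

theorem apply_mk_eq_of_isBounded_image (hU : IsOpen U) (hF : DifferentiableOn ℂ F (U ×ˢ univ))
    (hb : IsBounded (F '' (U ×ˢ univ))) (hz : z ∈ U) (w w' : ℂ) : F (z, w) = F (z, w') :=
  (hF.differentiable_apply_mk hU hz).apply_eq_apply_of_bounded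
    (hb.subset (range_subset_iff.2 fun _ => mem_image_of_mem F ⟨hz, trivial⟩)) w w'

theorem fst_apply_mk_eq_of_mapsTo {H : Type*} [NormedAddCommGroup H] [NormedSpace ℂ H]
    {V : Set G} {Φ : E × ℂ → G × H} (hU : IsOpen U) (hV : IsBounded V)
    (hΦ : DifferentiableOn ℂ Φ (U ×ˢ univ)) (hmaps : MapsTo Φ (U ×ˢ univ) (V ×ˢ univ)) :
    ∀ z ∈ U, ∀ w w', (Φ (z, w)).1 = (Φ (z, w')).1 := fun _ hz =>
  hΦ.fst.apply_mk_eq_of_isBounded_image hU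
    (hV.subset (image_subset_iff.2 fun _ hp => (hmaps hp).1)) hz

end DifferentiableOn

section FiberPreserving

variable {α β : Type*} {U : Set α} {Φ Ψ : α × β → α × β} {z : α}

theorem fst_apply_mk_fst_apply (hΦ : MapsTo Φ (U ×ˢ univ) (U ×ˢ univ))
    (hΨ : ∀ z ∈ U, ∀ w w', (Ψ (z, w)).1 = (Ψ (z, w')).1)
    (hinv : ∀ p ∈ U ×ˢ univ, Ψ (Φ p) = p) : ∀ z ∈ U, ∀ w u, (Ψ ((Φ (z, w)).1, u)).1 = z := by
  intro z hz w u
  rw [hΨ _ (hΦ ⟨hz, trivial⟩).1 u (Φ (z, w)).2, hinv _ ⟨hz, trivial⟩]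

theorem leftInverse_snd_apply_mk (hΦ : ∀ z ∈ U, ∀ w w', (Φ (z, w)).1 = (Φ (z, w')).1)
    (hinv : ∀ p ∈ U ×ˢ univ, Ψ (Φ p) = p) (hz : z ∈ U) (w₀ : β) :
    LeftInverse (fun u => (Ψ ((Φ (z, w₀)).1, u)).2) (fun w => (Φ (z, w)).2) := fun w => by
  beta_reduce
  rw [hΦ z hz w₀ w, Prod.mk.eta, hinv (z, w) ⟨hz, trivial⟩]

theorem rightInverse_snd_apply_mk (hΦ : MapsTo Φ (U ×ˢ univ) (U ×ˢ univ))
    (hΨ : ∀ z ∈ U, ∀ w w', (Ψ (z, w)).1 = (Ψ (z, w')).1)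
    (hinv : ∀ p ∈ U ×ˢ univ, Ψ (Φ p) = p ∧ Φ (Ψ p) = p) (hz : z ∈ U) (w₀ : β) :
    RightInverse (fun u => (Ψ ((Φ (z, w₀)).1, u)).2) (fun w => (Φ (z, w)).2) := fun u => by
  have hΨu : Ψ ((Φ (z, w₀)).1, u) = (z, (Ψ ((Φ (z, w₀)).1, u)).2) :=
    Prod.ext (fst_apply_mk_fst_apply hΦ hΨ (fun p hp => (hinv p hp).1) z hz w₀ u) rfl
  have hmem : ((Φ (z, w₀)).1, u) ∈ U ×ˢ univ := ⟨(hΦ (mk_mem_prod hz (mem_univ w₀))).1, trivial⟩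
  beta_reduce
  rw [← hΨu, (hinv _ hmem).2]

end FiberPreserving

/-- every holomorphic automorphism of Δ × ℂ has the form
(z, w) ↦ (φ(z), f(z)·w + g(z)) with φ ∈ Aut(Δ), f nowhere zero holomorphic,
g holomorphic. -/
theorem stmt9 (Φ Ψ : ℂ × ℂ → ℂ × ℂ)
    (hΦd : DifferentiableOn ℂ Φ (ball (0 : ℂ) 1 ×ˢ (univ : Set ℂ)))
    (hΨd : DifferentiableOn ℂ Ψ (ball (0 : ℂ) 1 ×ˢ (univ : Set ℂ)))
    (hΦmaps : MapsTo Φ (ball (0 : ℂ) 1 ×ˢ (univ : Set ℂ)) (ball (0 : ℂ) 1 ×ˢ (univ : Set ℂ)))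
    (hΨmaps : MapsTo Ψ (ball (0 : ℂ) 1 ×ˢ (univ : Set ℂ)) (ball (0 : ℂ) 1 ×ˢ (univ : Set ℂ)))
    (hinv : ∀ p ∈ ball (0 : ℂ) 1 ×ˢ (univ : Set ℂ), Ψ (Φ p) = p ∧ Φ (Ψ p) = p) :
    ∃ φ f g : ℂ → ℂ,
      DifferentiableOn ℂ φ (ball (0 : ℂ) 1) ∧
      BijOn φ (ball (0 : ℂ) 1) (ball (0 : ℂ) 1) ∧
      (∃ φ' : ℂ → ℂ, DifferentiableOn ℂ φ' (ball (0 : ℂ) 1) ∧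
        ∀ z ∈ ball (0 : ℂ) 1, φ' (φ z) = z ∧ φ (φ' z) = z) ∧
      DifferentiableOn ℂ f (ball (0 : ℂ) 1) ∧ (∀ z ∈ ball (0 : ℂ) 1, f z ≠ 0) ∧
      DifferentiableOn ℂ g (ball (0 : ℂ) 1) ∧
      ∀ z ∈ ball (0 : ℂ) 1, ∀ w : ℂ, Φ (z, w) = (φ z, f z * w + g z) := by
  have hΔ : IsOpen (ball (0 : ℂ) 1) := isOpen_ball
  have hΦ₁ := hΦd.fst_apply_mk_eq_of_mapsTo hΔ isBounded_ball hΦmaps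
  have hΨ₁ := hΨd.fst_apply_mk_eq_of_mapsTo hΔ isBounded_ball hΨmaps
  have hΨΦ := fst_apply_mk_fst_apply hΦmaps hΨ₁ fun p hp => (hinv p hp).1
  have hΦΨ := fst_apply_mk_fst_apply hΨmaps hΦ₁ fun p hp => (hinv p hp).2
  have hleft z (hz : z ∈ ball (0 : ℂ) 1) :=
    leftInverse_snd_apply_mk hΦ₁ (fun p hp => (hinv p hp).1) hz 0
  have haffine z (hz : z ∈ ball (0 : ℂ) 1) :=
    (hΦd.snd.differentiable_apply_mk hΔ hz).eq_affine_of_leftInverse_of_rightInverse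
      (hΨd.snd.differentiable_apply_mk hΔ (hΦmaps ⟨hz, trivial⟩).1) (hleft z hz)
      (rightInverse_snd_apply_mk hΦmaps hΨ₁ hinv hz 0)
  refine ⟨fun z => (Φ (z, 0)).1, fun z => (Φ (z, 1)).2 - (Φ (z, 0)).2, fun z => (Φ (z, 0)).2,
    hΦd.fst.differentiableOn_apply_mk_const 0,
    InvOn.bijOn ⟨fun z hz => hΨΦ z hz 0 0, fun z hz => hΦΨ z hz 0 0⟩
      (fun z hz => (hΦmaps ⟨hz, trivial⟩).1) (fun z hz => (hΨmaps ⟨hz, trivial⟩).1),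
    ⟨fun z => (Ψ (z, 0)).1, hΨd.fst.differentiableOn_apply_mk_const 0,
      fun z hz => ⟨hΨΦ z hz 0 0, hΦΨ z hz 0 0⟩⟩,
    (hΦd.snd.differentiableOn_apply_mk_const 1).sub (hΦd.snd.differentiableOn_apply_mk_const 0),
    fun z hz => sub_ne_zero.2 ((hleft z hz).injective.ne one_ne_zero),
    hΦd.snd.differentiableOn_apply_mk_const 0,
    fun z hz w => Prod.ext (hΦ₁ z hz w 0) (haffine z hz w)⟩
end

section
/- Let X = Δ × ℂ with exhaustion function τ(z, w) = |w| + (1 − |z|)^{-1}. Let D ⊂ X be a discrete subset containing a sequence (p_n, q_n) with |q_n| → ∞ and p_n → p ∈ Δ. Then D is not tame: there exists ζ: D → ℝ≥0 such that no automorphism of X of the form (z, w) ↦ (φ(z), f(z)w + g(z)) (φ ∈ Aut(Δ), f ∈ O*(Δ), g ∈ O(Δ)) satisfies τ(Φ(x)) ≥ ζ(x) for all x ∈ D. -/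
open Set Metric Filter Topology

/-!
Along the sequence `(p n, q n)` the base points stay near `p₀ ∈ Δ`, where `φ`, `f` and `g` are
continuous, so every automorphism `(z, w) ↦ (φ z, f z * w + g z)` satisfies
`τ (Φ (p n, q n)) ≤ A * ‖q n‖ + B` with constants `A, B` depending on `Φ`. Since `‖q n‖ → ∞`,
the single function `ζ (z, w) = ‖w‖ ^ 2` eventually exceeds every such affine bound.
-/

theorem eventually_mul_add_lt_sq {ι : Type*} {l : Filter ι} {a b r : ι → ℝ} {A B : ℝ}
    (ha : Tendsto a l (𝓝 A)) (hb : Tendsto b l (𝓝 B)) (hr : Tendsto r l atTop) :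
    ∀ᶠ i in l, a i * r i + b i < r i ^ 2 := by
  filter_upwards [ha.eventually_lt_const (lt_add_one A), hb.eventually_lt_const (lt_add_one B),
    hr.eventually_ge_atTop (|A| + |B| + 3)] with i hai hbi hri
  have hA := le_abs_self A
  have hB := le_abs_self B
  nlinarith [abs_nonneg A, abs_nonneg B]

theorem norm_mul_add_le_mul_add {𝕜 : Type*} [NormedDivisionRing 𝕜] (f w g : 𝕜) :
    ‖f * w + g‖ ≤ ‖f‖ * ‖w‖ + ‖g‖ :=
  (norm_add_le _ _).trans_eq (by rw [norm_mul])

theorem tendsto_inv_one_sub_norm {ι : Type*} {l : Filter ι} {u : ι → ℂ} {z : ℂ}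
    (hu : Tendsto u l (𝓝 z)) (hz : z ∈ ball (0 : ℂ) 1) :
    Tendsto (fun i => (1 - ‖u i‖)⁻¹) l (𝓝 (1 - ‖z‖)⁻¹) := by
  have hz' : ‖z‖ < 1 := mem_ball_zero_iff.mp hz
  exact (tendsto_const_nhds.sub hu.norm).inv₀ (by linarith)

theorem stmt10_general (D : Set (ℂ × ℂ))
    (p : ℕ → ℂ) (q : ℕ → ℂ) (hpq : ∀ n, (p n, q n) ∈ D)
    (hq : Tendsto (fun n => ‖q n‖) atTop atTop)
    (p₀ : ℂ) (hp₀ : ‖p₀‖ < 1) (hp : Tendsto p atTop (nhds p₀)) :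
    ∃ ζ : ℂ × ℂ → ℝ, (∀ x, 0 ≤ ζ x) ∧
      ∀ φ f g : ℂ → ℂ,
        DifferentiableOn ℂ φ (ball (0 : ℂ) 1) →
        BijOn φ (ball (0 : ℂ) 1) (ball (0 : ℂ) 1) →
        DifferentiableOn ℂ f (ball (0 : ℂ) 1) → (∀ z ∈ ball (0 : ℂ) 1, f z ≠ 0) →
        DifferentiableOn ℂ g (ball (0 : ℂ) 1) →
        ∃ x ∈ D,
          ‖f x.1 * x.2 + g x.1‖ + (1 - ‖φ x.1‖)⁻¹ < ζ x := by
  refine ⟨fun x => ‖x.2‖ ^ 2, fun x => by positivity, ?_⟩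
  intro φ f g hφ hφbij hf _ hg
  have hp₀mem : p₀ ∈ ball (0 : ℂ) 1 := mem_ball_zero_iff.mpr hp₀
  have along {h : ℂ → ℂ} (hh : DifferentiableOn ℂ h (ball (0 : ℂ) 1)) :
      Tendsto (fun n => h (p n)) atTop (𝓝 (h p₀)) :=
    ((hh.continuousOn.continuousAt (isOpen_ball.mem_nhds hp₀mem)).tendsto).comp hp
  have hbase : Tendsto (fun n => ‖g (p n)‖ + (1 - ‖φ (p n)‖)⁻¹) atTop
      (𝓝 (‖g p₀‖ + (1 - ‖φ p₀‖)⁻¹)) :=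
    (along hg).norm.add (tendsto_inv_one_sub_norm (along hφ) (hφbij.mapsTo hp₀mem))
  obtain ⟨n, hn⟩ := (eventually_mul_add_lt_sq (along hf).norm hbase hq).exists
  refine ⟨(p n, q n), hpq n, ?_⟩
  calc ‖f (p n) * q n + g (p n)‖ + (1 - ‖φ (p n)‖)⁻¹
      ≤ ‖f (p n)‖ * ‖q n‖ + (‖g (p n)‖ + (1 - ‖φ (p n)‖)⁻¹) := by
        linarith [norm_mul_add_le_mul_add (f (p n)) (q n) (g (p n))]
    _ < ‖q n‖ ^ 2 := hn

/-- a discrete subset of Δ × ℂ containing a sequence (p_n, q_n) with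
|q_n| → ∞ and p_n → p ∈ Δ is not tame: some ζ defeats every automorphism
(z,w) ↦ (φ(z), f(z)w + g(z)) for the exhaustion function τ(z,w) = |w| + (1−|z|)⁻¹. -/
theorem stmt10 (D : Set (ℂ × ℂ))
    (hDsub : D ⊆ ball (0 : ℂ) 1 ×ˢ (univ : Set ℂ))
    (hDdisc : ∀ p ∈ ball (0 : ℂ) 1 ×ˢ (univ : Set ℂ), ¬ AccPt p (Filter.principal D))
    (p : ℕ → ℂ) (q : ℕ → ℂ) (hpq : ∀ n, (p n, q n) ∈ D)
    (hq : Tendsto (fun n => ‖q n‖) atTop atTop)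
    (p₀ : ℂ) (hp₀ : ‖p₀‖ < 1) (hp : Tendsto p atTop (nhds p₀)) :
    ∃ ζ : ℂ × ℂ → ℝ, (∀ x, 0 ≤ ζ x) ∧
      ∀ φ f g : ℂ → ℂ,
        DifferentiableOn ℂ φ (ball (0 : ℂ) 1) →
        BijOn φ (ball (0 : ℂ) 1) (ball (0 : ℂ) 1) →
        DifferentiableOn ℂ f (ball (0 : ℂ) 1) → (∀ z ∈ ball (0 : ℂ) 1, f z ≠ 0) →
        DifferentiableOn ℂ g (ball (0 : ℂ) 1) →
        ∃ x ∈ D,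
          ‖f x.1 * x.2 + g x.1‖ + (1 - ‖φ x.1‖)⁻¹ < ζ x :=
  stmt10_general D p q hpq hq p₀ hp₀ hp
end

section
/- Let D be a discrete subset of X = ℂⁿ \ {0} (n ≥ 2) which is not discrete as a subset of ℂⁿ, i.e., there is a sequence γ_k ∈ D with γ_k → 0. Then D is not tame in X: with the exhaustion function τ(x) = max{‖x‖, ‖x‖^{-1}}, choosing ζ with ζ(γ_k) > k/‖γ_k‖, no holomorphic automorphism φ of X satisfies τ(φ(x)) ≥ ζ(x) for all x ∈ D. -/
/-!
Both an automorphism `φ` of `ℂⁿ \ {0}` and its inverse `ψ` are bounded near the origin: since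
`n ≥ 2`, every point near `0` lies on a complex line missing `0`, and the maximum principle on that
line bounds `φ` and `ψ` by their values on the unit sphere. The Schwarz lemma on such lines then
controls the oscillation of `ψ` on small balls, and since `ψ (φ (γ k)) = γ k → 0` this makes `ψ`
Lipschitz at the origin: `‖ψ y‖ ≤ C ‖y‖`. On the other hand `τ (φ (γ k)) ≥ ζ (γ k) > k / ‖γ k‖`
together with the bound on `φ` forces `‖φ (γ k)‖ < ‖γ k‖ / k`, so
`‖γ k‖ = ‖ψ (φ (γ k))‖ < C ‖γ k‖ / k`, which is absurd for `k > C`.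
-/

open Set Filter Metric Module Topology

/-- A holomorphic automorphism of X = ℂⁿ \ {0}. -/
def IsAutPunctured (n : ℕ)
    (φ : EuclideanSpace ℂ (Fin n) → EuclideanSpace ℂ (Fin n)) : Prop :=
  Set.BijOn φ {x | x ≠ 0} {x | x ≠ 0} ∧
  DifferentiableOn ℂ φ {x | x ≠ 0} ∧
  ∃ ψ : EuclideanSpace ℂ (Fin n) → EuclideanSpace ℂ (Fin n),
    Set.BijOn ψ {x | x ≠ 0} {x | x ≠ 0} ∧ DifferentiableOn ℂ ψ {x | x ≠ 0} ∧
    ∀ x : EuclideanSpace ℂ (Fin n), x ≠ 0 → ψ (φ x) = x ∧ φ (ψ x) = x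

theorem exists_norm_eq_one_inner_eq_zero {𝕜 E : Type*} [RCLike 𝕜] [NormedAddCommGroup E]
    [InnerProductSpace 𝕜 E] (hE : 2 ≤ finrank 𝕜 E) (y : E) :
    ∃ v : E, ‖v‖ = 1 ∧ inner 𝕜 y v = 0 := by
  have : FiniteDimensional 𝕜 E := Module.finite_of_finrank_pos (by omega)
  have hspan : finrank 𝕜 (𝕜 ∙ y) ≤ 1 := by
    simpa using finrank_span_le_card ({y} : Set E)
  have hperp : (𝕜 ∙ y)ᗮ ≠ ⊥ := mt Submodule.finrank_eq_zero.mpr <| by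
    have := (𝕜 ∙ y).finrank_add_finrank_orthogonal
    omega
  obtain ⟨u, hu, hu0⟩ := Submodule.exists_mem_ne_zero_of_ne_bot hperp
  exact ⟨(‖u‖⁻¹ : 𝕜) • u, norm_smul_inv_norm hu0, Submodule.inner_right_of_mem_orthogonal
    (Submodule.mem_span_singleton_self y) (Submodule.smul_mem _ _ hu)⟩

theorem LinearIndependent.pair_of_inner_eq_zero_of_inner_ne_zero {𝕜 E : Type*} [RCLike 𝕜]
    [NormedAddCommGroup E] [InnerProductSpace 𝕜 E] {x y v : E} (hx : x ≠ 0)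
    (hxv : inner 𝕜 x v = 0) (hyv : inner 𝕜 y v ≠ 0) : LinearIndependent 𝕜 ![x, y] := by
  refine (LinearIndependent.pair_iff' hx).mpr fun t hty => hyv ?_
  rw [← hty, inner_smul_left, hxv, mul_zero]

section PuncturedHolomorphic

variable {E F : Type*} [NormedAddCommGroup F] [NormedSpace ℂ F]

/-- The complex line `y + ℂ v` with `v ⊥ y` misses the origin and meets the sphere in a circle
around `y`, so the maximum principle applies on it. -/
theorem norm_le_of_forall_mem_sphere_norm_le [NormedAddCommGroup E] [InnerProductSpace ℂ E]
    (hE : 2 ≤ finrank ℂ E) {f : E → F} (hf : DifferentiableOn ℂ f {0}ᶜ) {r M : ℝ}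
    (hM : ∀ x ∈ sphere (0 : E) r, ‖f x‖ ≤ M) {y : E} (hy0 : y ≠ 0) (hyr : ‖y‖ < r) :
    ‖f y‖ ≤ M := by
  obtain ⟨v, hv, hyv⟩ := exists_norm_eq_one_inner_eq_zero hE y
  have hline_norm : ∀ w : ℂ, ‖y + w • v‖ ^ 2 = ‖y‖ ^ 2 + ‖w‖ ^ 2 := fun w => by
    have hperp : inner ℂ y (w • v) = 0 := by rw [inner_smul_right, hyv, mul_zero]
    rw [sq, sq, sq, norm_add_sq_eq_norm_sq_add_norm_sq_of_inner_eq_zero _ _ hperp, norm_smul, hv,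
      mul_one]
  have hline_ne : ∀ w : ℂ, y + w • v ≠ 0 := fun w h => by
    have := hline_norm w
    rw [h, norm_zero] at this
    exact hy0 (norm_eq_zero.mp (by nlinarith [norm_nonneg y, norm_nonneg w]))
  have hg : Differentiable ℂ fun w : ℂ => f (y + w • v) := fun w =>
    (hf.differentiableAt (isOpen_compl_singleton.mem_nhds (hline_ne w))).comp w (by fun_prop)
  have hρ : 0 < √(r ^ 2 - ‖y‖ ^ 2) := Real.sqrt_pos.mpr (by nlinarith [norm_nonneg y])
  have hsphere : ∀ w ∈ frontier (ball (0 : ℂ) √(r ^ 2 - ‖y‖ ^ 2)), y + w • v ∈ sphere 0 r := by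
    intro w hw
    rw [frontier_ball _ hρ.ne', mem_sphere_zero_iff_norm] at hw
    rw [mem_sphere_zero_iff_norm, ← pow_left_inj₀ (norm_nonneg _) (by linarith [norm_nonneg y])
      two_ne_zero, hline_norm, hw, Real.sq_sqrt (by nlinarith [norm_nonneg y])]
    ring
  simpa using Complex.norm_le_of_forall_mem_frontier_norm_le isBounded_ball hg.diffContOnCl
    (fun w hw => hM _ (hsphere w hw)) (subset_closure (mem_ball_self hρ))

theorem exists_norm_le_of_differentiableOn_compl_zero [NormedAddCommGroup E]
    [InnerProductSpace ℂ E] (hE : 2 ≤ finrank ℂ E) {f : E → F}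
    (hf : DifferentiableOn ℂ f {0}ᶜ) {r : ℝ} (hr : 0 < r) :
    ∃ M, ∀ y ≠ 0, ‖y‖ < r → ‖f y‖ ≤ M := by
  have : FiniteDimensional ℂ E := Module.finite_of_finrank_pos (by omega)
  obtain ⟨M, hM⟩ := (isCompact_sphere (0 : E) r).exists_bound_of_continuousOn
    (hf.continuousOn.mono fun x hx h0 => by simp_all [hr.ne])
  exact ⟨M, fun y hy0 hyr => norm_le_of_forall_mem_sphere_norm_le hE hf hM hy0 hyr⟩

theorem norm_sub_le_of_linearIndependent [NormedAddCommGroup E] [NormedSpace ℂ E] {f : E → F}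
    (hf : DifferentiableOn ℂ f {0}ᶜ) {r M s : ℝ} (hM : ∀ y ≠ 0, ‖y‖ < r → ‖f y‖ ≤ M)
    (hsr : 4 * s < r) {a b : E} (hab : LinearIndependent ℂ ![a, b]) (ha : ‖a‖ ≤ s)
    (hb : ‖b‖ ≤ s) : ‖f a - f b‖ ≤ 8 * M * s / r := by
  have hline_ne : ∀ w : ℂ, a + w • (b - a) ≠ 0 := fun w h => by
    have := LinearIndependent.pair_iff.mp hab (1 - w) w (by rw [← h]; module)
    exact one_ne_zero (by linear_combination this.1 + this.2)
  have hs : 0 < s := (norm_pos_iff.mpr (hline_ne 0 ∘ by simp)).trans_le ha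
  set R := r / (4 * s)
  have hR : 1 < R := (one_lt_div (by positivity)).mpr hsr
  have hline_lt : ∀ w ∈ ball (0 : ℂ) R, ‖a + w • (b - a)‖ < r := fun w hw => by
    rw [mem_ball_zero_iff] at hw
    have hba : ‖b - a‖ ≤ 2 * s := (norm_sub_le b a).trans (by linarith)
    have hwR : ‖w‖ * (2 * s) < R * (2 * s) := by gcongr
    have hRs : R * (2 * s) = r / 2 := by simp only [R]; field_simp; ring
    calc ‖a + w • (b - a)‖ ≤ ‖a‖ + ‖w‖ * ‖b - a‖ := (norm_add_le _ _).trans_eq (by rw [norm_smul])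
      _ ≤ s + ‖w‖ * (2 * s) := by gcongr
      _ < r := by linarith
  set g : ℂ → F := fun w => f (a + w • (b - a))
  have hg : Differentiable ℂ g := fun w =>
    (hf.differentiableAt (isOpen_compl_singleton.mem_nhds (hline_ne w))).comp w (by fun_prop)
  have hmaps : MapsTo g (ball 0 R) (closedBall (g 0) (2 * M)) := fun w hw => by
    rw [mem_closedBall, dist_eq_norm]
    have h0 : (0 : ℂ) ∈ ball 0 R := mem_ball_self (by linarith)
    linarith [norm_sub_le (g w) (g 0), hM _ (hline_ne w) (hline_lt w hw),
      hM _ (hline_ne 0) (hline_lt 0 h0)]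
  have := Complex.dist_le_div_mul_dist_of_mapsTo_ball hg.differentiableOn hmaps
    (z := 1) (mem_ball_zero_iff.mpr (by simpa using hR))
  simp only [g, dist_eq_norm, sub_zero, norm_one, mul_one, one_smul, zero_smul, add_zero,
    add_sub_cancel] at this
  rw [norm_sub_rev]
  calc ‖f b - f a‖ ≤ 2 * M / R := this
    _ = 8 * M * s / r := by simp only [R]; field_simp; ring

/-- When `a` and `b` are proportional, the segment from `a` to `b` may pass through the origin;
one then passes through `c = a + s • v` with `v ⊥ a`, which is independent of both. -/
theorem norm_sub_le_of_ne_zero [NormedAddCommGroup E] [InnerProductSpace ℂ E]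
    (hE : 2 ≤ finrank ℂ E) {f : E → F} (hf : DifferentiableOn ℂ f {0}ᶜ) {r M s : ℝ}
    (hM : ∀ y ≠ 0, ‖y‖ < r → ‖f y‖ ≤ M) (hsr : 8 * s < r) {a b : E} (ha0 : a ≠ 0)
    (hb0 : b ≠ 0) (ha : ‖a‖ ≤ s) (hb : ‖b‖ ≤ s) : ‖f a - f b‖ ≤ 32 * M * s / r := by
  have hs : 0 < s := (norm_pos_iff.mpr ha0).trans_le ha
  have hM0 : 0 ≤ M := (norm_nonneg _).trans (hM a ha0 (by linarith))
  by_cases hab : LinearIndependent ℂ ![a, b]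
  · calc ‖f a - f b‖ ≤ 8 * M * s / r :=
          norm_sub_le_of_linearIndependent hf hM (by linarith) hab ha hb
      _ ≤ 32 * M * s / r := by gcongr <;> linarith
  obtain ⟨μ, rfl⟩ : ∃ μ : ℂ, μ • a = b := by simpa [LinearIndependent.pair_iff' ha0] using hab
  obtain ⟨v, hv, hav⟩ := exists_norm_eq_one_inner_eq_zero hE a
  set c := a + (s : ℂ) • v
  have hcv : inner ℂ c v ≠ 0 := by
    simp [c, hav, inner_self_eq_norm_sq_to_K, hv, hs.ne']
  have hc : ‖c‖ ≤ 2 * s :=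
    (norm_add_le _ _).trans (by simp [norm_smul, hv, abs_of_pos hs]; linarith)
  have hac := norm_sub_le_of_linearIndependent hf hM (by linarith)
    (.pair_of_inner_eq_zero_of_inner_ne_zero ha0 hav hcv) (ha.trans (by linarith)) hc
  have hbc := norm_sub_le_of_linearIndependent hf hM (by linarith)
    (.pair_of_inner_eq_zero_of_inner_ne_zero hb0 (by rw [inner_smul_left, hav, mul_zero]) hcv)
    (hb.trans (by linarith)) hc
  calc ‖f a - f (μ • a)‖ ≤ ‖f a - f c‖ + ‖f (μ • a) - f c‖ := by
        simpa only [norm_sub_rev (f c)] using norm_sub_le_norm_sub_add_norm_sub (f a) (f c) _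
    _ ≤ 8 * M * (2 * s) / r + 8 * M * (2 * s) / r := add_le_add hac hbc
    _ = 32 * M * s / r := by ring

theorem norm_le_of_tendsto_zero [NormedAddCommGroup E] [InnerProductSpace ℂ E]
    (hE : 2 ≤ finrank ℂ E) {f : E → F} (hf : DifferentiableOn ℂ f {0}ᶜ) {r M : ℝ}
    (hM : ∀ y ≠ 0, ‖y‖ < r → ‖f y‖ ≤ M) {ι : Type*} {l : Filter ι} [l.NeBot] {u : ι → E}
    (hu0 : ∀ i, u i ≠ 0) (hu : Tendsto u l (𝓝 0)) (hfu : Tendsto (f ∘ u) l (𝓝 0)) {y : E}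
    (hy0 : y ≠ 0) (hyr : 8 * ‖y‖ < r) : ‖f y‖ ≤ 32 * M * ‖y‖ / r := by
  have hlim : Tendsto (fun i => ‖f y - f (u i)‖) l (𝓝 ‖f y‖) := by
    simpa using (tendsto_const_nhds.sub hfu).norm
  refine le_of_tendsto hlim ?_
  filter_upwards [(tendsto_norm_zero.comp hu).eventually_le_const (norm_pos_iff.mpr hy0)]
    with i hi
  exact norm_sub_le_of_ne_zero hE hf hM hyr hy0 (hu0 i) le_rfl hi

end PuncturedHolomorphic

theorem mul_lt_of_div_lt_max_inv {k r a : ℝ} (hr : 0 < r) (hr1 : r < 1) (ha : 0 < a)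
    (hak : a < k) (h : k / r < max a a⁻¹) : k * a < r := by
  have hk : k ≤ k / r := le_div_self (ha.trans hak).le hr hr1.le
  rcases lt_max_iff.mp h with h | h
  · linarith
  · rwa [lt_inv_comm₀ (div_pos (ha.trans hak) hr) ha, inv_div, lt_div_iff₀ (ha.trans hak),
      mul_comm] at h

theorem stmt11_general {n : ℕ} (hn : 2 ≤ n) (D : Set (EuclideanSpace ℂ (Fin n)))
    (hD0 : ∀ x ∈ D, x ≠ 0)
    (γ : ℕ → EuclideanSpace ℂ (Fin n)) (hγD : ∀ k, γ k ∈ D)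
    (hγ : Tendsto γ atTop (nhds 0)) :
    ∀ ζ : EuclideanSpace ℂ (Fin n) → ℝ, (∀ x, 0 ≤ ζ x) →
      (∀ k : ℕ, (k : ℝ) / ‖γ k‖ < ζ (γ k)) →
      ∀ φ, IsAutPunctured n φ →
        ∃ x ∈ D, max ‖φ x‖ (‖φ x‖)⁻¹ < ζ x := by
  rintro ζ - hζ φ ⟨hφ, hφd, ψ, -, hψd, hψφ⟩
  by_contra! hτ
  have hE : 2 ≤ finrank ℂ (EuclideanSpace ℂ (Fin n)) := by simpa using hn
  have hγ0 (k : ℕ) : γ k ≠ 0 := hD0 _ (hγD k)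
  have hφγ0 (k : ℕ) : φ (γ k) ≠ 0 := hφ.mapsTo (hγ0 k)
  have hψφγ (k : ℕ) : ψ (φ (γ k)) = γ k := (hψφ _ (hγ0 k)).1
  have hγ_norm : Tendsto (‖γ ·‖) atTop (𝓝 0) := tendsto_norm_zero.comp hγ
  obtain ⟨Mφ, hMφ⟩ := exists_norm_le_of_differentiableOn_compl_zero hE hφd one_pos
  obtain ⟨Mψ, hMψ⟩ := exists_norm_le_of_differentiableOn_compl_zero hE hψd one_pos
  have hφγ_small : ∀ᶠ k in atTop, k * ‖φ (γ k)‖ < ‖γ k‖ := by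
    filter_upwards [hγ_norm.eventually_lt_const one_pos, eventually_gt_atTop ⌈Mφ⌉₊]
      with k hγk hkM
    exact mul_lt_of_div_lt_max_inv (norm_pos_iff.mpr (hγ0 k)) hγk (norm_pos_iff.mpr (hφγ0 k))
      ((hMφ _ (hγ0 k) hγk).trans_lt (Nat.lt_of_ceil_lt hkM)) ((hζ k).trans_le (hτ _ (hγD k)))
  have hφγ : Tendsto (φ ∘ γ) atTop (𝓝 0) := by
    refine tendsto_zero_iff_norm_tendsto_zero.mpr
      (squeeze_zero' (.of_forall fun _ => norm_nonneg _) ?_ hγ_norm)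
    filter_upwards [hφγ_small, eventually_ge_atTop 1] with k hk hk1
    have : (1 : ℝ) ≤ k := by exact_mod_cast hk1
    exact show ‖φ (γ k)‖ ≤ ‖γ k‖ by nlinarith [norm_nonneg (φ (γ k))]
  have hψ_lip : ∀ᶠ k in atTop, ‖γ k‖ ≤ 32 * Mψ * ‖φ (γ k)‖ := by
    filter_upwards [(tendsto_norm_zero.comp hφγ).eventually_lt_const
      (by norm_num : (0 : ℝ) < 1 / 8)] with k hk
    simp only [Function.comp_apply] at hk
    have := norm_le_of_tendsto_zero hE hψd hMψ hφγ0 hφγ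
      (by simpa [Function.comp_def, hψφγ] using hγ) (hφγ0 k) (by linarith)
    simpa [hψφγ] using this
  obtain ⟨k, hk_small, hk_lip, hk_large⟩ :=
    (hφγ_small.and (hψ_lip.and (eventually_gt_atTop ⌈32 * Mψ⌉₊))).exists
  have := mul_lt_mul_of_pos_right (Nat.lt_of_ceil_lt hk_large) (norm_pos_iff.mpr (hφγ0 k))
  linarith

/-- a discrete subset of ℂⁿ \ {0} (n ≥ 2) accumulating at the origin is
not tame: with τ(x) = max(‖x‖, ‖x‖⁻¹), any ζ with ζ(γ_k) > k/‖γ_k‖ defeats every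
automorphism of ℂⁿ \ {0}. -/
theorem stmt11 {n : ℕ} (hn : 2 ≤ n) (D : Set (EuclideanSpace ℂ (Fin n)))
    (hD0 : ∀ x ∈ D, x ≠ 0)
    (hDdisc : ∀ p : EuclideanSpace ℂ (Fin n), p ≠ 0 → ¬ AccPt p (Filter.principal D))
    (γ : ℕ → EuclideanSpace ℂ (Fin n)) (hγD : ∀ k, γ k ∈ D)
    (hγ : Tendsto γ atTop (nhds 0)) :
    ∀ ζ : EuclideanSpace ℂ (Fin n) → ℝ, (∀ x, 0 ≤ ζ x) →
      (∀ k : ℕ, (k : ℝ) / ‖γ k‖ < ζ (γ k)) →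
      ∀ φ, IsAutPunctured n φ →
        ∃ x ∈ D, max ‖φ x‖ (‖φ x‖)⁻¹ < ζ x :=
  stmt11_general hn D hD0 γ hγD hγ
end

section
/- There is no threshold sequence for X = ℂⁿ \ {0} (n ≥ 2): for every exhaustion function ρ on X and every sequence of positive reals (R_n), there exists a discrete subset D of X with #{x ∈ D : ρ(x) ≤ R_n} < n for all n which is not tame. -/
open Set Filter

/-- An exhaustion function on X = ℂⁿ \ {0}. -/
def IsExhaustionPunctured (n : ℕ) (ρ : EuclideanSpace ℂ (Fin n) → ℝ) : Prop :=
  ContinuousOn ρ {x | x ≠ 0} ∧ (∀ x, 0 ≤ ρ x) ∧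
    ∀ c : ℝ, IsCompact {x : EuclideanSpace ℂ (Fin n) | x ≠ 0 ∧ ρ x ≤ c}

/-- A tame discrete subset of X = ℂⁿ \ {0}. -/
def IsTamePunctured (n : ℕ) (D : Set (EuclideanSpace ℂ (Fin n))) : Prop :=
  ∀ σ, IsExhaustionPunctured n σ →
    ∀ ζ : EuclideanSpace ℂ (Fin n) → ℝ, (∀ x, 0 ≤ ζ x) →
      ∃ φ, IsAutPunctured n φ ∧ ∀ x ∈ D, ζ x ≤ σ (φ x)

/-!
Choose points `x k → 0` so fast that `R k < ρ (x j)` for `j ≥ k`; this is possible because `ρ`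
tends to infinity at the puncture, and it makes the counting condition automatic.

For `n ≥ 2`, a holomorphic map on `ℂⁿ \ {0}` is bounded near `0` (Hartogs), so an automorphism `φ`
and its inverse both extend over `0` with value `0`. The Schwarz lemma for `φ⁻¹` then gives
`‖x‖ ≤ M ‖φ x‖`, hence `‖x‖ ^ 2 ≤ ‖φ x‖ ≤ 1` near `0`. Taking for `ζ x` a strict upper bound of
`ρ` on the shell `‖x‖ ^ 2 ≤ ‖y‖ ≤ 1`, no automorphism achieves `ζ ≤ ρ ∘ φ` on the sequence.
-/

open Metric Topology Function Module

section Schwarz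

variable {E F : Type*} [NormedAddCommGroup E] [NormedSpace ℂ E]
  [NormedAddCommGroup F] [NormedSpace ℂ F] [CompleteSpace F]

/-- Schwarz lemma on the complex lines through `0`; the singularity at `0` is removable since
`φ` tends to `0` there. -/
theorem norm_le_mul_norm_of_tendsto_zero {φ : E → F} {M : ℝ}
    (hφ : DifferentiableOn ℂ φ {0}ᶜ) (hM : ∀ z : E, z ≠ 0 → ‖z‖ ≤ 1 → ‖φ z‖ ≤ M)
    (hlim : Tendsto φ (𝓝[≠] 0) (𝓝 0)) {y : E} (hy0 : y ≠ 0) (hy1 : ‖y‖ < 1) :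
    ‖φ y‖ ≤ M * ‖y‖ := by
  set u : E := (‖y‖ : ℂ)⁻¹ • y
  have hu : ‖u‖ = 1 := norm_smul_inv_norm hy0
  have hwu : ∀ w : ℂ, w ≠ 0 → w • u ≠ 0 := fun w hw =>
    smul_ne_zero hw (norm_ne_zero_iff.1 (hu ▸ one_ne_zero))
  set g : ℂ → F := update (fun w => φ (w • u)) 0 0
  have hg0 : g 0 = 0 := update_self _ _ _
  have hgw : ∀ w, w ≠ 0 → g w = φ (w • u) := fun w hw => update_of_ne hw _ _
  have hline : Tendsto (fun w : ℂ => w • u) (𝓝[≠] 0) (𝓝[≠] 0) := by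
    refine tendsto_nhdsWithin_iff.2 ⟨?_, eventually_mem_nhdsWithin.mono hwu⟩
    exact ((continuous_id.smul continuous_const).tendsto' (0 : ℂ) (0 : E) (zero_smul ℂ u)).mono_left
      nhdsWithin_le_nhds
  have hg : DifferentiableOn ℂ g (ball 0 1) := by
    rw [← Complex.differentiableOn_compl_singleton_and_continuousAt_iff (ball_mem_nhds 0 one_pos)]
    refine ⟨fun w hw => ?_, continuousAt_update_same.2 (hlim.comp hline)⟩
    have hw0 : w ≠ 0 := hw.2
    refine DifferentiableAt.differentiableWithinAt ?_
    refine ((hφ.differentiableAt (isOpen_compl_singleton.mem_nhds (hwu w hw0))).comp w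
      (differentiableAt_id.smul_const u)).congr_of_eventuallyEq ?_
    filter_upwards [isOpen_compl_singleton.mem_nhds hw0] using hgw
  have hmaps : MapsTo g (ball 0 1) (closedBall (g 0) M) := by
    intro w hw
    rw [hg0, mem_closedBall_zero_iff]
    rcases eq_or_ne w 0 with rfl | hw0
    · simpa [hg0] using (hM y hy0 hy1.le).trans' (norm_nonneg _)
    · rw [hgw w hw0]
      exact hM _ (hwu w hw0) (by rw [norm_smul, hu, mul_one]; exact (mem_ball_zero_iff.1 hw).le)
  have hyball : (‖y‖ : ℂ) ∈ ball (0 : ℂ) 1 := by simpa using hy1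
  have hgy : g ‖y‖ = φ y := by
    have hy' : (‖y‖ : ℂ) ≠ 0 := by exact_mod_cast norm_ne_zero_iff.2 hy0
    rw [hgw _ hy', smul_smul, mul_inv_cancel₀ hy', one_smul]
  simpa [hgy, hg0] using Complex.dist_le_div_mul_dist_of_mapsTo_ball hg hmaps hyball

end Schwarz

section HolomorphicOffZero

variable {E F : Type*} [NormedAddCommGroup E] [InnerProductSpace ℂ E] [FiniteDimensional ℂ E]
  [NormedAddCommGroup F] [NormedSpace ℂ F]

theorem exists_norm_eq_one_inner_eq_zero_s12 (hE : 2 ≤ finrank ℂ E) (z : E) :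
    ∃ e : E, ‖e‖ = 1 ∧ inner ℂ z e = 0 := by
  have hK : (ℂ ∙ z)ᗮ ≠ ⊥ := by
    intro h
    have h1 : finrank ℂ (ℂ ∙ z) ≤ 1 := by
      simpa using finrank_span_le_card (R := ℂ) ({z} : Set E)
    have h2 := (ℂ ∙ z).finrank_add_finrank_orthogonal
    rw [h, finrank_bot] at h2
    omega
  obtain ⟨e, he, he0⟩ := Submodule.exists_mem_ne_zero_of_ne_bot hK
  refine ⟨(‖e‖ : ℂ)⁻¹ • e, norm_smul_inv_norm he0, ?_⟩
  rw [inner_smul_right, Submodule.inner_right_of_mem_orthogonal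
    (Submodule.mem_span_singleton_self z) he, mul_zero]

/-- Hartogs phenomenon: on the complex line through `z` in a direction orthogonal to `z`, the unit
circle around `z` lies in the shell `1 ≤ ‖·‖ ≤ 2`, so the maximum principle bounds `‖φ z‖` by the
maximum on that shell. -/
theorem exists_bound_of_differentiableOn_compl_zero (hE : 2 ≤ finrank ℂ E) {φ : E → F}
    (hφ : DifferentiableOn ℂ φ {0}ᶜ) : ∃ M, ∀ z : E, z ≠ 0 → ‖z‖ ≤ 1 → ‖φ z‖ ≤ M := by
  have hshell : closedBall (0 : E) 2 \ ball 0 1 ⊆ {0}ᶜ := by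
    rintro y ⟨-, hy⟩ rfl
    exact hy (mem_ball_self one_pos)
  obtain ⟨M, hM⟩ := ((isCompact_closedBall _ _).diff isOpen_ball).exists_bound_of_continuousOn
    (hφ.continuousOn.mono hshell)
  refine ⟨M, fun z hz0 hz1 => ?_⟩
  obtain ⟨e, he, hze⟩ := exists_norm_eq_one_inner_eq_zero_s12 hE z
  have hsq : ∀ w : ℂ, ‖z + w • e‖ ^ 2 = ‖z‖ ^ 2 + ‖w‖ ^ 2 := fun w => by
    rw [sq, sq, sq, norm_add_sq_eq_norm_sq_add_norm_sq_of_inner_eq_zero _ _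
      (by rw [inner_smul_right, hze, mul_zero]), norm_smul, he, mul_one]
  have hline : ∀ w : ℂ, z + w • e ≠ 0 := fun w h => by
    have := hsq w
    rw [h, norm_zero] at this
    exact hz0 (norm_eq_zero.1 (by nlinarith [norm_nonneg z, norm_nonneg w]))
  have hdiff : Differentiable ℂ fun w : ℂ => φ (z + w • e) := fun w =>
    (hφ.differentiableAt (isOpen_compl_singleton.mem_nhds (hline w))).comp w
      ((differentiableAt_id.smul_const e).const_add z)
  have hcircle : ∀ w ∈ frontier (ball (0 : ℂ) 1), ‖φ (z + w • e)‖ ≤ M := by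
    intro w hw
    rw [frontier_ball 0 one_ne_zero, mem_sphere_zero_iff_norm] at hw
    have := hsq w
    rw [hw] at this
    refine hM _ ⟨mem_closedBall_zero_iff.2 ?_, fun h => ?_⟩
    · nlinarith [norm_nonneg (z + w • e), norm_nonneg z]
    · nlinarith [norm_nonneg (z + w • e), norm_nonneg z, mem_ball_zero_iff.1 h]
  simpa using Complex.norm_le_of_forall_mem_frontier_norm_le isBounded_ball hdiff.diffContOnCl
    hcircle (subset_closure (mem_ball_self one_pos))

/-- `φ` is bounded by some `M` near `0`, and the points `x` with `ε ≤ ‖φ x‖ ≤ M` are images under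
`ψ` of a compact set avoiding `0`, so they stay away from `0`. -/
theorem tendsto_nhds_zero_of_leftInvOn [ProperSpace F] (hE : 2 ≤ finrank ℂ E) {φ : E → F}
    {ψ : F → E} (hφ : DifferentiableOn ℂ φ {0}ᶜ) (hψ : ContinuousOn ψ {0}ᶜ)
    (hψ0 : MapsTo ψ {0}ᶜ {0}ᶜ) (hinv : LeftInvOn ψ φ {0}ᶜ) : Tendsto φ (𝓝[≠] 0) (𝓝 0) := by
  obtain ⟨M, hM⟩ := exists_bound_of_differentiableOn_compl_zero hE hφ
  refine Metric.tendsto_nhds.2 fun ε hε => ?_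
  set K := closedBall (0 : F) M \ ball 0 ε
  have hK0 : K ⊆ {0}ᶜ := by
    rintro y ⟨-, hy⟩ rfl
    exact hy (mem_ball_self hε)
  have hψK : (0 : E) ∉ ψ '' K := fun ⟨y, hy, hy0⟩ => hψ0 (hK0 hy) hy0
  have hfar : ∀ᶠ x in 𝓝 (0 : E), x ∉ ψ '' K :=
    ((((isCompact_closedBall _ _).diff isOpen_ball).image_of_continuousOn
      (hψ.mono hK0)).isClosed.isOpen_compl.mem_nhds hψK)
  filter_upwards [self_mem_nhdsWithin, nhdsWithin_le_nhds hfar,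
    nhdsWithin_le_nhds (closedBall_mem_nhds (0 : E) one_pos)] with x hx0 hxK hx1
  rw [dist_zero_right]
  by_contra! h
  exact hxK ⟨φ x, ⟨mem_closedBall_zero_iff.2 (hM x hx0 (mem_closedBall_zero_iff.1 hx1)),
    fun h' => (mem_ball_zero_iff.1 h').not_ge h⟩, hinv hx0⟩

end HolomorphicOffZero

theorem Filter.Tendsto.not_accPt_range {X : Type*} [TopologicalSpace X] [T2Space X]
    {x : ℕ → X} {a : X} (hx : Tendsto x atTop (𝓝 a)) {p : X} (hp : p ≠ a) :
    ¬ AccPt p (𝓟 (range x)) := by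
  rw [accPt_iff_frequently_nhdsNE, not_frequently]
  obtain ⟨U, V, hU, hV, hUV⟩ := t2_separation_nhds hp
  obtain ⟨N, hN⟩ := eventually_atTop.1 (hx hV)
  filter_upwards [nhdsWithin_le_nhds hU,
    nhdsNE_le_cofinite p ((finite_Iio N).image x).compl_mem_cofinite] with y hyU hyN ⟨k, hk⟩
  subst hk
  exact hUV.ne_of_mem hyU (hN k (not_lt.1 fun hk => hyN ⟨k, hk, rfl⟩)) rfl

theorem encard_setOf_mem_range_le_lt {α β : Type*} [LinearOrder β] {x : ℕ → α} {ρ : α → β}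
    {R : ℕ → β} (h : ∀ k j, k ≤ j → R k < ρ (x j)) (k : ℕ) :
    {y | y ∈ range x ∧ ρ y ≤ R k}.encard < (k + 1 : ℕ∞) := by
  classical
  have hsub : {y | y ∈ range x ∧ ρ y ≤ R k} ⊆ ((Finset.range k).image x : Set α) := by
    rintro _ ⟨⟨j, rfl⟩, hj⟩
    simp only [Finset.coe_image, Finset.coe_range]
    exact mem_image_of_mem x (not_le.1 fun hkj => (h k j hkj).not_ge hj)
  calc {y | y ∈ range x ∧ ρ y ≤ R k}.encard
      ≤ ((Finset.range k).image x).card := by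
        rw [← encard_coe_eq_coe_finsetCard]; exact encard_mono hsub
    _ ≤ k := by exact_mod_cast Finset.card_image_le.trans (Finset.card_range k).le
    _ < k + 1 := by exact_mod_cast k.lt_succ_self

noncomputable def halvingMinSeq (b : ℕ → ℝ) : ℕ → ℝ
  | 0 => b 0 / 2
  | k + 1 => min (halvingMinSeq b k) (b (k + 1)) / 2

theorem exists_strictAnti_tendsto_zero_lt (a : ℕ → ℝ) (ha : ∀ k, 0 < a k) :
    ∃ t : ℕ → ℝ, StrictAnti t ∧ (∀ k, 0 < t k) ∧ Tendsto t atTop (𝓝 0) ∧ ∀ k, t k < a k := by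
  set b : ℕ → ℝ := fun k => min (a k) (1 / (k + 1))
  have hb : ∀ k, 0 < b k := fun k => lt_min (ha k) (by positivity)
  set t := halvingMinSeq b
  have ht_pos : ∀ k, 0 < t k := by
    intro k
    induction k with
    | zero => exact half_pos (hb 0)
    | succ k ih => exact half_pos (lt_min ih (hb _))
  have ht_lt : ∀ k, t k < b k := by
    rintro (_ | k)
    · exact half_lt_self (hb 0)
    · exact (half_lt_self (lt_min (ht_pos k) (hb _))).trans_le (min_le_right _ _)
  refine ⟨t, strictAnti_nat_of_succ_lt fun k => ?_, ht_pos, ?_,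
    fun k => (ht_lt k).trans_le (min_le_left _ _)⟩
  · exact (half_lt_self (lt_min (ht_pos k) (hb _))).trans_le (min_le_left _ _)
  · exact squeeze_zero (fun k => (ht_pos k).le)
      (fun k => (ht_lt k).le.trans (min_le_right _ _)) tendsto_one_div_add_atTop_nhds_zero_nat

theorem exists_injective_tendsto_zero_lt {E : Type*} [NormedAddCommGroup E] [NormedSpace ℝ E]
    [Nontrivial E] {ρ : E → ℝ} (hρ : Tendsto ρ (𝓝[≠] 0) atTop) (R : ℕ → ℝ) :
    ∃ x : ℕ → E, Injective x ∧ (∀ k, x k ≠ 0) ∧ Tendsto x atTop (𝓝 0) ∧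
      ∀ k j, k ≤ j → R k < ρ (x j) := by
  have hε : ∀ k, ∃ ε > 0, ∀ ⦃y : E⦄, dist y 0 < ε → y ∈ ({0}ᶜ : Set E) → R k < ρ y :=
    fun k => Metric.eventually_nhds_iff.1 <|
      eventually_nhdsWithin_iff.1 (hρ.eventually_gt_atTop (R k))
  choose ε hε_pos hε using hε
  obtain ⟨t, ht_anti, ht_pos, ht_lim, ht_lt⟩ := exists_strictAnti_tendsto_zero_lt ε hε_pos
  obtain ⟨e, he⟩ := exists_norm_eq E zero_le_one
  have he0 : e ≠ 0 := norm_ne_zero_iff.1 (he.symm ▸ one_ne_zero)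
  have hnorm : ∀ k, ‖t k • e‖ = t k := fun k => by
    rw [norm_smul, he, mul_one, Real.norm_of_nonneg (ht_pos k).le]
  refine ⟨fun k => t k • e, (smul_left_injective ℝ he0).comp ht_anti.injective,
    fun k => smul_ne_zero (ht_pos k).ne' he0, by simpa using ht_lim.smul_const e,
    fun k j hkj => hε k ?_ (smul_ne_zero (ht_pos j).ne' he0)⟩
  rw [dist_zero_right, hnorm]
  exact (ht_anti.antitone hkj).trans_lt (ht_lt k)

section EuclideanPunctured

variable {n : ℕ}

theorem IsExhaustionPunctured.tendsto_atTop {ρ : EuclideanSpace ℂ (Fin n) → ℝ}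
    (hρ : IsExhaustionPunctured n ρ) : Tendsto ρ (𝓝[≠] 0) atTop := by
  refine Filter.tendsto_atTop.2 fun c => ?_
  have h0 : (0 : EuclideanSpace ℂ (Fin n)) ∉ {x | x ≠ 0 ∧ ρ x ≤ c} := fun h => h.1 rfl
  filter_upwards [self_mem_nhdsWithin,
    nhdsWithin_le_nhds ((hρ.2.2 c).isClosed.isOpen_compl.mem_nhds h0)] with x hx0 hxK
  by_contra! h
  exact hxK ⟨hx0, h.le⟩

theorem IsAutPunctured.eventually_sq_le_norm_le_one (hn : 2 ≤ n)
    {φ : EuclideanSpace ℂ (Fin n) → EuclideanSpace ℂ (Fin n)} (hφ : IsAutPunctured n φ) :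
    ∀ᶠ x in 𝓝[≠] 0, ‖x‖ ^ 2 ≤ ‖φ x‖ ∧ ‖φ x‖ ≤ 1 := by
  obtain ⟨hφX, hφd, ψ, hψX, hψd, hinv⟩ := hφ
  have hE : 2 ≤ finrank ℂ (EuclideanSpace ℂ (Fin n)) := by rwa [finrank_euclideanSpace_fin]
  have hφ0 := tendsto_nhds_zero_of_leftInvOn hE hφd hψd.continuousOn hψX.mapsTo
    fun x hx => (hinv x hx).1
  have hψ0 := tendsto_nhds_zero_of_leftInvOn hE hψd hφd.continuousOn hφX.mapsTo
    fun x hx => (hinv x hx).2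
  obtain ⟨M, hM⟩ := exists_bound_of_differentiableOn_compl_zero hE hψd
  have hnorm : Tendsto (fun x : EuclideanSpace ℂ (Fin n) => ‖x‖ * M) (𝓝 0) (𝓝 0) :=
    (continuous_norm.mul continuous_const).tendsto' _ _ (by simp)
  filter_upwards [self_mem_nhdsWithin, hφ0.eventually (ball_mem_nhds 0 one_pos),
    nhdsWithin_le_nhds (hnorm.eventually (ge_mem_nhds one_pos))] with x hx0 hx1 hxM
  rw [dist_zero_right] at hx1
  have hlin : ‖x‖ ≤ M * ‖φ x‖ := by
    simpa [(hinv x hx0).1] using norm_le_mul_norm_of_tendsto_zero hψd hM hψ0 (hφX.mapsTo hx0) hx1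
  exact ⟨by nlinarith [norm_nonneg x, norm_nonneg (φ x)], hx1.le⟩

theorem not_isTamePunctured_range_of_tendsto (hn : 2 ≤ n) {ρ : EuclideanSpace ℂ (Fin n) → ℝ}
    (hρ : IsExhaustionPunctured n ρ) {x : ℕ → EuclideanSpace ℂ (Fin n)}
    (hx : Tendsto x atTop (𝓝[≠] 0)) : ¬ IsTamePunctured n (range x) := by
  intro htame
  have hshell : ∀ y : EuclideanSpace ℂ (Fin n), ∃ C, 0 ≤ C ∧
      (y ≠ 0 → ∀ z, ‖y‖ ^ 2 ≤ ‖z‖ → ‖z‖ ≤ 1 → ρ z < C) := by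
    intro y
    rcases eq_or_ne y 0 with rfl | hy
    · exact ⟨0, le_rfl, fun h => absurd rfl h⟩
    have hA : closedBall 0 1 \ ball 0 (‖y‖ ^ 2) ⊆ {x : EuclideanSpace ℂ (Fin n) | x ≠ 0} := by
      rintro z ⟨-, hz⟩ rfl
      exact hz (mem_ball_self (by positivity))
    obtain ⟨C, hC⟩ := ((isCompact_closedBall _ _).diff isOpen_ball).bddAbove_image (hρ.1.mono hA)
    refine ⟨max 0 (C + 1), le_max_left _ _, fun _ z hz hz1 => ?_⟩
    have := hC ⟨z, ⟨mem_closedBall_zero_iff.2 hz1, fun h => (mem_ball_zero_iff.1 h).not_ge hz⟩, rfl⟩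
    exact this.trans_lt ((lt_add_one C).trans_le (le_max_right _ _))
  choose ζ hζ0 hζ using hshell
  obtain ⟨φ, hφ, hζφ⟩ := htame ρ hρ ζ hζ0
  obtain ⟨k, hk, hk0⟩ := ((hx.eventually (hφ.eventually_sq_le_norm_le_one hn)).and
    (hx.eventually self_mem_nhdsWithin)).exists
  exact (hζφ (x k) ⟨k, rfl⟩).not_gt (hζ _ hk0 _ hk.1 hk.2)

end EuclideanPunctured

theorem stmt12_general {n : ℕ} (hn : 2 ≤ n)
    (ρ : EuclideanSpace ℂ (Fin n) → ℝ) (hρ : IsExhaustionPunctured n ρ)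
    (R : ℕ → ℝ) :
    ∃ D : Set (EuclideanSpace ℂ (Fin n)),
      (∀ x ∈ D, x ≠ 0) ∧ D.Infinite ∧
      (∀ p : EuclideanSpace ℂ (Fin n), p ≠ 0 → ¬ AccPt p (Filter.principal D)) ∧
      (∀ k : ℕ, {x | x ∈ D ∧ ρ x ≤ R k}.encard < (k + 1 : ℕ∞)) ∧
      ¬ IsTamePunctured n D := by
  have : Nonempty (Fin n) := ⟨⟨0, by omega⟩⟩
  obtain ⟨x, hx_inj, hx0, hx_lim, hρx⟩ := exists_injective_tendsto_zero_lt hρ.tendsto_atTop R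
  refine ⟨range x, forall_mem_range.2 hx0, infinite_range_of_injective hx_inj,
    fun p hp => hx_lim.not_accPt_range hp, encard_setOf_mem_range_le_lt hρx,
    not_isTamePunctured_range_of_tendsto hn hρ ?_⟩
  exact tendsto_nhdsWithin_iff.2 ⟨hx_lim, .of_forall hx0⟩

/-- ℂⁿ \ {0} (n ≥ 2) admits no threshold sequence: for every
exhaustion function ρ and every sequence of positive reals (R_n) there is a
discrete subset of ℂⁿ \ {0}, sparse relative to (R_n), which is not tame. -/
theorem stmt12 {n : ℕ} (hn : 2 ≤ n)
    (ρ : EuclideanSpace ℂ (Fin n) → ℝ) (hρ : IsExhaustionPunctured n ρ)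
    (R : ℕ → ℝ) (hRpos : ∀ k, 0 < R k) :
    ∃ D : Set (EuclideanSpace ℂ (Fin n)),
      (∀ x ∈ D, x ≠ 0) ∧ D.Infinite ∧
      (∀ p : EuclideanSpace ℂ (Fin n), p ≠ 0 → ¬ AccPt p (Filter.principal D)) ∧
      (∀ k : ℕ, {x | x ∈ D ∧ ρ x ≤ R k}.encard < (k + 1 : ℕ∞)) ∧
      ¬ IsTamePunctured n D :=
  stmt12_general hn ρ hρ R
end

section
/- Let A(k) be a well-placed sequence in SL_n(ℂ). Then the images of the columns of A(k) in projective space converge: for each column index h, the class [column_h(A(k))] in ℙ^{n−1}(ℂ) converges to [e₁] = [(1, 0, …, 0)] as k → ∞. Consequently the sequence (π(A(k))) in (ℙ^{n−1}(ℂ))ⁿ converges to ([e₁], …, [e₁]), whose column vectors are not linearly independent, so {π(A(k))} is a discrete subset of the open set of tuples of linearly independent lines. -/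
/-!
Dividing the `h`-th column of `A k` by its first entry gives a vector whose other entries have
norm `‖A k 0 h / A k j h‖⁻¹ → 0`, so this column tends to `e₁`, and so does its class in `ℙⁿ⁻¹`.
Projective space is Hausdorff (two distinct lines are separated by `[v] ↦ ‖f v‖ / ‖v‖` for a
linear form `f` vanishing on exactly one of them), so the only cluster point of the sequence of
column tuples is its limit `([e₁], …, [e₁])`, and `n ≥ 2` equal vectors are linearly dependent.
-/

open Filter

/-- The quotient topology on projective space ℙ(ℂⁿ). -/
noncomputable instance projectivizationTopology (n : ℕ) :
    TopologicalSpace (Projectivization ℂ (Fin n → ℂ)) :=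
  instTopologicalSpaceQuotient

open Topology
open scoped LinearAlgebra.Projectivization

theorem not_linearIndependent_const {ι R M : Type*} [Nontrivial ι] [Semiring R] [Nontrivial R]
    [AddCommMonoid M] [Module R M] (v : M) : ¬ LinearIndependent R (fun _ : ι => v) := by
  intro hv
  obtain ⟨i, j, hij⟩ := exists_pair_ne ι
  exact hij (hv.injective rfl)

theorem tendsto_div_nhds_zero_of_tendsto_norm_div_atTop {ι 𝕜 : Type*} [NormedField 𝕜]
    {l : Filter ι} {a b : ι → 𝕜} (h : Tendsto (fun i => ‖a i / b i‖) l atTop) :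
    Tendsto (fun i => b i / a i) l (𝓝 0) := by
  rw [tendsto_zero_iff_norm_tendsto_zero]
  refine h.inv_tendsto_atTop.congr fun i => ?_
  rw [Pi.inv_apply, ← norm_inv, inv_div]

theorem tendsto_div_apply_zero {ι 𝕜 : Type*} [NormedField 𝕜] {n : ℕ} [NeZero n]
    {l : Filter ι} {v : ι → Fin n → 𝕜} (hv : ∀ i, v i 0 ≠ 0)
    (h : ∀ j ≠ 0, Tendsto (fun i => ‖v i 0 / v i j‖) l atTop) :
    Tendsto (fun i j => v i j / v i 0) l (𝓝 fun j => if j = 0 then 1 else 0) := by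
  refine tendsto_pi_nhds.2 fun j => ?_
  by_cases hj : j = 0
  · subst hj
    simpa only [div_self (hv _), if_true] using tendsto_const_nhds
  · simpa only [hj, if_false] using tendsto_div_nhds_zero_of_tendsto_norm_div_atTop (h j hj)

namespace Projectivization

theorem exists_linearMap_apply_rep_ne_zero_eq_zero {K V : Type*} [Field K] [AddCommGroup V]
    [Module K V] {x y : ℙ K V} (hxy : x ≠ y) :
    ∃ f : V →ₗ[K] K, f x.rep ≠ 0 ∧ f y.rep = 0 := by
  have hx : x.rep ∉ K ∙ y.rep := by
    rw [Submodule.mem_span_singleton]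
    rintro ⟨a, ha⟩
    apply hxy
    rw [← x.mk_rep, ← y.mk_rep, mk_eq_mk_iff']
    exact ⟨a, ha⟩
  obtain ⟨f, hfx, hf⟩ := Submodule.exists_le_ker_of_notMem hx
  exact ⟨f, hfx, hf (Submodule.mem_span_singleton_self _)⟩

variable {n : ℕ}

noncomputable def normRatio (f : (Fin n → ℂ) →ₗ[ℂ] ℂ) : ℙ ℂ (Fin n → ℂ) → ℝ :=
  Projectivization.lift (fun v => ‖f v‖ / ‖(v : Fin n → ℂ)‖) fun a b t h => by
    have ht : t ≠ 0 := by rintro rfl; exact a.2 (by simpa using h)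
    rw [h, map_smul, norm_smul, norm_smul, mul_div_mul_left _ _ (norm_ne_zero_iff.2 ht)]

theorem normRatio_apply (f : (Fin n → ℂ) →ₗ[ℂ] ℂ) (x : ℙ ℂ (Fin n → ℂ)) :
    normRatio f x = ‖f x.rep‖ / ‖x.rep‖ := by
  conv_lhs => rw [← x.mk_rep]
  rfl

theorem continuous_normRatio (f : (Fin n → ℂ) →ₗ[ℂ] ℂ) : Continuous (normRatio f) :=
  ((f.continuous_of_finiteDimensional.comp continuous_subtype_val).norm.div
    continuous_subtype_val.norm fun v => norm_ne_zero_iff.2 v.2).quotient_lift _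

instance : T2Space (ℙ ℂ (Fin n → ℂ)) where
  t2 x y hxy := by
    obtain ⟨f, hfx, hfy⟩ := exists_linearMap_apply_rep_ne_zero_eq_zero hxy
    refine separated_by_continuous (continuous_normRatio f) ?_
    rw [normRatio_apply, normRatio_apply, hfy, norm_zero, zero_div]
    exact div_ne_zero (norm_ne_zero_iff.2 hfx) (norm_ne_zero_iff.2 x.rep_nonzero)

theorem tendsto_mk_of_tendsto_smul {ι : Type*} {l : Filter ι} {v : ι → Fin n → ℂ}
    (hv : ∀ i, v i ≠ 0) {c : ι → ℂ} (hc : ∀ i, c i ≠ 0) {w : Fin n → ℂ} (hw : w ≠ 0)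
    (h : Tendsto (fun i => c i • v i) l (𝓝 w)) :
    Tendsto (fun i => mk ℂ (v i) (hv i)) l (𝓝 (mk ℂ w hw)) := by
  have hcv : ∀ i, c i • v i ≠ 0 := fun i => smul_ne_zero (hc i) (hv i)
  have hmk : ∀ i, mk ℂ (v i) (hv i) = mk ℂ (c i • v i) (hcv i) := fun i =>
    (mk_eq_mk_iff' ℂ _ _ _ _).2 ⟨(c i)⁻¹, inv_smul_smul₀ (hc i) _⟩
  simp only [hmk]
  exact (continuous_quotient_mk'.tendsto _).comp (tendsto_subtype_rng.2 h)

end Projectivization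

theorem stmt16_general {n : ℕ} [NeZero n] (hn : 2 ≤ n) (A : ℕ → Fin n → Fin n → ℂ)
    (hnz : ∀ k i j, A k i j ≠ 0)
    (hrow : ∀ j h : Fin n, j ≠ 0 →
      StrictMono (fun k => ‖A k 0 h / A k j h‖) ∧
      ¬ BddAbove (Set.range fun k => ‖A k 0 h / A k j h‖)) :
    (∀ h : Fin n,
      Tendsto (fun k => (fun j : Fin n => A k j h / A k 0 h)) atTop
        (nhds (fun j : Fin n => if j = 0 then (1:ℂ) else 0))) ∧
    (∀ h : Fin n,
      Tendsto (fun k => Projectivization.mk ℂ (fun j : Fin n => A k j h)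
          (fun h0 => hnz k 0 h (congrFun h0 0))) atTop
        (nhds (Projectivization.mk ℂ (fun j : Fin n => if j = 0 then (1:ℂ) else 0)
          (fun h0 => one_ne_zero ((if_pos rfl).symm.trans (congrFun h0 0)))))) ∧
    ¬ LinearIndependent ℂ (fun _ : Fin n =>
        (Projectivization.mk ℂ (fun j : Fin n => if j = 0 then (1:ℂ) else 0)
          (fun h0 => one_ne_zero ((if_pos rfl).symm.trans (congrFun h0 0)))).rep) ∧
    ∀ p : Fin n → Projectivization ℂ (Fin n → ℂ),
      LinearIndependent ℂ (fun i => (p i).rep) →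
      ¬ MapClusterPt p atTop (fun k => fun h : Fin n =>
          Projectivization.mk ℂ (fun j : Fin n => A k j h)
            (fun h0 => hnz k 0 h (congrFun h0 0))) := by
  have hcol : ∀ h, Tendsto (fun k j => A k j h / A k 0 h) atTop
      (𝓝 fun j => if j = 0 then 1 else 0) := fun h =>
    tendsto_div_apply_zero (fun k => hnz k 0 h) fun j hj =>
      tendsto_atTop_atTop_of_monotone' (hrow j h hj).1.monotone (hrow j h hj).2
  have hproj := fun h => Projectivization.tendsto_mk_of_tendsto_smul
    (fun k h0 => hnz k 0 h (congrFun h0 0)) (fun k => inv_ne_zero (hnz k 0 h))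
    (fun h0 => one_ne_zero (congrFun h0 0))
    ((hcol h).congr fun k => funext fun j => div_eq_inv_mul _ _)
  have := Fin.nontrivial_iff_two_le.2 hn
  refine ⟨hcol, hproj, not_linearIndependent_const _, fun p hp hp_cluster => ?_⟩
  obtain rfl := eq_of_nhds_neBot (ClusterPt.mono hp_cluster (tendsto_pi_nhds.2 hproj))
  exact not_linearIndependent_const _ hp

/-- for a well-placed sequence A(k) in SL_n(ℂ), each column converges
projectively to [e₁]; the tuple of projective columns converges to ([e₁],…,[e₁]), whose
representatives are not linearly independent, so the sequence of tuples does not cluster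
at any tuple of linearly independent lines (i.e. its image is discrete in S/T). -/
theorem stmt16 {n : ℕ} [NeZero n] (hn : 2 ≤ n) (A : ℕ → Fin n → Fin n → ℂ)
    (hdet : ∀ k, Matrix.det (Matrix.of (A k)) = 1)
    (hnz : ∀ k i j, A k i j ≠ 0)
    (hrow : ∀ j h : Fin n, j ≠ 0 →
      StrictMono (fun k => ‖A k 0 h / A k j h‖) ∧
      ¬ BddAbove (Set.range fun k => ‖A k 0 h / A k j h‖))
    (hcol : ∀ j h : Fin n, j ≠ 0 →
      StrictMono (fun k => ‖A k h 0 / A k h j‖) ∧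
      ¬ BddAbove (Set.range fun k => ‖A k h 0 / A k h j‖)) :
    (∀ h : Fin n,
      Tendsto (fun k => (fun j : Fin n => A k j h / A k 0 h)) atTop
        (nhds (fun j : Fin n => if j = 0 then (1:ℂ) else 0))) ∧
    (∀ h : Fin n,
      Tendsto (fun k => Projectivization.mk ℂ (fun j : Fin n => A k j h)
          (fun h0 => hnz k 0 h (congrFun h0 0))) atTop
        (nhds (Projectivization.mk ℂ (fun j : Fin n => if j = 0 then (1:ℂ) else 0)
          (fun h0 => one_ne_zero ((if_pos rfl).symm.trans (congrFun h0 0)))))) ∧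
    ¬ LinearIndependent ℂ (fun _ : Fin n =>
        (Projectivization.mk ℂ (fun j : Fin n => if j = 0 then (1:ℂ) else 0)
          (fun h0 => one_ne_zero ((if_pos rfl).symm.trans (congrFun h0 0)))).rep) ∧
    ∀ p : Fin n → Projectivization ℂ (Fin n → ℂ),
      LinearIndependent ℂ (fun i => (p i).rep) →
      ¬ MapClusterPt p atTop (fun k => fun h : Fin n =>
          Projectivization.mk ℂ (fun j : Fin n => A k j h)
            (fun h0 => hnz k 0 h (congrFun h0 0))) :=
  stmt16_general hn A hnz hrow
end
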